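/- arXiv:2603.20478 — 9 statements merged into one kernel-verified Lean document; each statement's English description precedes it below -/
import Mathlib

section
/- Let X be a compact Hausdorff space. The set MTBX of totally balanced capacities on X is a closed subset of MX. -/
open Set MeasureTheory TopologicalSpace
open scoped NNReal

/-- An upper-semicontinuous normed capacity on a topological space `X`:
a `[0,1]`-valued monotone function on closed sets with `ν ∅ = 0`, `ν X = 1`,
satisfying the upper-semicontinuity condition. -/
structure Capacity (X : Type*) [TopologicalSpace X] where
  toFun : Set X → ℝ
  empty' : toFun ∅ = 0
  univ' : toFun Set.univ = 1
  mono' : ∀ F G : Set X, IsClosed F → IsClosed G → F ⊆ G → toFun F ≤ toFun G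
  usc' : ∀ (F : Set X) (a : ℝ), IsClosed F → toFun F < a →
    ∃ O : Set X, IsOpen O ∧ F ⊆ O ∧ ∀ B : Set X, IsCompact B → B ⊆ O → toFun B < a

namespace Capacity

variable {X : Type*} [TopologicalSpace X]

/-- The extension of a capacity to open sets: `ν(U) = sup{ν(K) : K closed, K ⊆ U}`. -/
noncomputable def opensVal (ν : Capacity X) (U : Set X) : ℝ :=
  sSup (ν.toFun '' {K : Set X | IsClosed K ∧ K ⊆ U})

/-- The topology on the space of capacities, generated by the subbase of sets
`O₋(F,a) = {c : c(F) < a}` for `F` closed and `O₊(U,a) = {c : c(U) > a}` for `U` open. -/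
instance : TopologicalSpace (Capacity X) :=
  TopologicalSpace.generateFrom
    ({S | ∃ (F : Set X) (a : ℝ), IsClosed F ∧ S = {c : Capacity X | c.toFun F < a}} ∪
     {S | ∃ (U : Set X) (a : ℝ), IsOpen U ∧ S = {c : Capacity X | a < c.opensVal U}})

/-- A capacity is convex (supermodular) if `ν(A∪B) + ν(A∩B) ≥ ν(A) + ν(B)` for closed `A,B`. -/
def IsConvexCap (ν : Capacity X) : Prop :=
  ∀ A B : Set X, IsClosed A → IsClosed B →
    ν.toFun A + ν.toFun B ≤ ν.toFun (A ∪ B) + ν.toFun (A ∩ B)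

/-- A capacity is balanced if `Σ λᵢ ν(Aᵢ) ≤ 1` whenever `λᵢ ≥ 0`, `Aᵢ` closed and
`Σ λᵢ χ_{Aᵢ} ≤ 1` pointwise. -/
def IsBalanced (ν : Capacity X) : Prop :=
  ∀ (n : ℕ) (lam : Fin n → ℝ) (A : Fin n → Set X),
    (∀ i, 0 ≤ lam i) → (∀ i, IsClosed (A i)) →
    (∀ x : X, ∑ i, lam i * (A i).indicator (fun _ => (1 : ℝ)) x ≤ 1) →
    ∑ i, lam i * ν.toFun (A i) ≤ 1

/-- A capacity is totally balanced if for every closed `B`, `Σ λᵢ ν(Aᵢ) ≤ ν(B)` whenever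
`λᵢ ≥ 0`, the `Aᵢ ⊆ B` are closed and `Σ λᵢ χ_{Aᵢ} ≤ 1` pointwise. -/
def IsTotallyBalanced (ν : Capacity X) : Prop :=
  ∀ B : Set X, IsClosed B →
    ∀ (n : ℕ) (lam : Fin n → ℝ) (A : Fin n → Set X),
      (∀ i, 0 ≤ lam i) → (∀ i, IsClosed (A i)) → (∀ i, A i ⊆ B) →
      (∀ x : X, ∑ i, lam i * (A i).indicator (fun _ => (1 : ℝ)) x ≤ 1) →
      ∑ i, lam i * ν.toFun (A i) ≤ ν.toFun B

variable [MeasurableSpace X] [BorelSpace X]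

/-- The core of a capacity: all regular Borel probability measures dominating it on closed sets. -/
def core (ν : Capacity X) : Set (ProbabilityMeasure X) :=
  {μ | μ.toMeasure.Regular ∧ ∀ A : Set X, IsClosed A → ν.toFun A ≤ ((μ A : ℝ≥0) : ℝ)}

/-- A capacity is exact if for every closed `B` some measure in its core attains `ν(B)` at `B`. -/
def IsExact (ν : Capacity X) : Prop :=
  ∀ B : Set X, IsClosed B → ∃ μ ∈ ν.core, ((μ B : ℝ≥0) : ℝ) = ν.toFun B

end Capacity

/-- Finitely many closed sets with empty intersection in a normal space admit open
neighborhoods whose closures have empty intersection. -/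
lemma aux_shrink {X : Type*} [TopologicalSpace X] [NormalSpace X] {ι : Type*} [Finite ι]
    (A : ι → Set X) (hA : ∀ i, IsClosed (A i)) (h : (⋂ i, A i) = ∅) :
    ∃ U : ι → Set X, (∀ i, IsOpen (U i)) ∧ (∀ i, A i ⊆ U i) ∧ (⋂ i, closure (U i)) = ∅ := by
  have hcover : (⋃ i, (A i)ᶜ) = univ := by
    rw [← compl_iInter, h, compl_empty]
  have hfin : ∀ x : X, {i | x ∈ (A i)ᶜ}.Finite := fun x => Set.toFinite _
  obtain ⟨v, hvU, hvo, hvc⟩ := exists_iUnion_eq_closure_subset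
    (fun i => (hA i).isOpen_compl) hfin hcover
  obtain ⟨z, hzU, hzo, hzc⟩ := exists_iUnion_eq_closure_subset hvo
    (fun x => Set.toFinite _) hvU
  refine ⟨fun i => (closure (z i))ᶜ, fun i => (isClosed_closure).isOpen_compl, ?_, ?_⟩
  · intro i
    have : closure (z i) ⊆ (A i)ᶜ := (hzc i).trans ((subset_closure).trans (hvc i))
    intro x hx
    simp only [mem_compl_iff]
    exact fun hxc => (this hxc) hx
  · have key : ∀ i, closure ((closure (z i))ᶜ) ⊆ (z i)ᶜ := by
      intro i
      have hdisj : z i ∩ (closure (z i))ᶜ = ∅ := by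
        rw [Set.eq_empty_iff_forall_notMem]
        rintro x ⟨hx1, hx2⟩
        exact hx2 (subset_closure hx1)
      intro x hx
      intro hxz
      obtain ⟨y, hy⟩ := mem_closure_iff.1 hx (z i) (hzo i) hxz
      rw [Set.eq_empty_iff_forall_notMem] at hdisj
      exact hdisj y ⟨hy.1, hy.2⟩
    rw [Set.eq_empty_iff_forall_notMem]
    intro x hx
    simp only [mem_iInter] at hx
    have : x ∈ ⋃ i, z i := hzU ▸ mem_univ x
    obtain ⟨i, hi⟩ := mem_iUnion.1 this
    exact key i (hx i) hi

/-- Version over a finset of indices, extended to the whole index type. -/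
lemma aux_shrink_finset {X : Type*} [TopologicalSpace X] [NormalSpace X] {n : ℕ}
    (A : Fin n → Set X) (hA : ∀ i, IsClosed (A i)) (T : Finset (Fin n))
    (h : (⋂ i ∈ T, A i) = ∅) :
    ∃ U : Fin n → Set X, (∀ i, IsOpen (U i)) ∧ (∀ i, A i ⊆ U i) ∧
      (⋂ i ∈ T, closure (U i)) = ∅ := by
  have h' : (⋂ i : {i // i ∈ T}, A i) = ∅ := by
    rw [Set.eq_empty_iff_forall_notMem]
    intro x hx
    rw [Set.eq_empty_iff_forall_notMem] at h
    refine h x ?_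
    simp only [mem_iInter] at hx ⊢
    exact fun i hi => hx ⟨i, hi⟩
  obtain ⟨V, hVo, hVs, hVe⟩ := aux_shrink (fun i : {i // i ∈ T} => A i)
    (fun i => hA i) h'
  classical
  refine ⟨fun i => if hi : i ∈ T then V ⟨i, hi⟩ else univ, ?_, ?_, ?_⟩
  · intro i; by_cases hi : i ∈ T <;> simp [hi, hVo]
  · intro i
    by_cases hi : i ∈ T
    · simpa [hi] using hVs ⟨i, hi⟩
    · simp [hi]
  · rw [Set.eq_empty_iff_forall_notMem]
    intro x hx
    rw [Set.eq_empty_iff_forall_notMem] at hVe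
    refine hVe x ?_
    simp only [mem_iInter] at hx ⊢
    rintro ⟨i, hi⟩
    have := hx i hi
    simpa [hi] using this

/-- Given closed sets inside an open `O`, find open `U i ⊇ A i` with closures inside `O`,
such that any subfamily of the `closure (U i)` with empty `A`-intersection has empty
closure-intersection. -/
lemma aux_neighborhoods {X : Type*} [TopologicalSpace X] [NormalSpace X] {n : ℕ}
    (A : Fin n → Set X) (hA : ∀ i, IsClosed (A i)) (O : Set X) (hO : IsOpen O)
    (hAO : ∀ i, A i ⊆ O) :
    ∃ U : Fin n → Set X, (∀ i, IsOpen (U i)) ∧ (∀ i, A i ⊆ U i) ∧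
      (∀ i, closure (U i) ⊆ O) ∧
      (∀ T : Finset (Fin n), (⋂ i ∈ T, A i) = ∅ → (⋂ i ∈ T, closure (U i)) = ∅) := by
  classical
  -- for each bad T choose a family
  have hch : ∀ T : Finset (Fin n), ∃ U : Fin n → Set X,
      ((⋂ i ∈ T, A i) = ∅ → (∀ i, IsOpen (U i)) ∧ (∀ i, A i ⊆ U i) ∧
        (⋂ i ∈ T, closure (U i)) = ∅) := by
    intro T
    by_cases hT : (⋂ i ∈ T, A i) = ∅
    · obtain ⟨U, h1, h2, h3⟩ := aux_shrink_finset A hA T hT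
      exact ⟨U, fun _ => ⟨h1, h2, h3⟩⟩
    · exact ⟨fun _ => univ, fun h => absurd h hT⟩
  choose W hW using hch
  -- neighborhoods inside O
  have hV : ∀ i, ∃ V : Set X, IsOpen V ∧ A i ⊆ V ∧ closure V ⊆ O := fun i =>
    normal_exists_closure_subset (hA i) hO (hAO i)
  choose V hVo hVs hVc using hV
  refine ⟨fun i => V i ∩ ⋂ T : Finset (Fin n), ⋂ (_ : (⋂ j ∈ T, A j) = ∅ ∧ i ∈ T), W T i,
    ?_, ?_, ?_, ?_⟩
  · intro i
    refine (hVo i).inter (isOpen_iInter_of_finite fun T => isOpen_iInter_of_finite ?_)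
    rintro ⟨hbad, hiT⟩
    exact ((hW T hbad).1 i)
  · intro i
    refine subset_inter (hVs i) ?_
    simp only [subset_iInter_iff]
    rintro T ⟨hbad, hiT⟩
    exact (hW T hbad).2.1 i
  · intro i
    refine (closure_mono (inter_subset_left)).trans (hVc i)
  · intro T hbad
    rw [Set.eq_empty_iff_forall_notMem]
    intro x hx
    have hWT : (⋂ i ∈ T, closure (W T i)) = ∅ := (hW T hbad).2.2
    rw [Set.eq_empty_iff_forall_notMem] at hWT
    refine hWT x ?_
    simp only [mem_iInter] at hx ⊢
    intro i hi
    refine closure_mono ?_ (hx i hi)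
    refine (inter_subset_right).trans ?_
    exact iInter_subset_of_subset T (iInter_subset_of_subset ⟨hbad, hi⟩ subset_rfl)

lemma Capacity.toFun_nonneg {X : Type*} [TopologicalSpace X] (c : Capacity X) {F : Set X}
    (hF : IsClosed F) : 0 ≤ c.toFun F :=
  c.empty' ▸ c.mono' ∅ F isClosed_empty hF (empty_subset F)

lemma Capacity.opensVal_le_toFun {X : Type*} [TopologicalSpace X] (c : Capacity X)
    {U N : Set X} (hN : IsClosed N) (hUN : U ⊆ N) : c.opensVal U ≤ c.toFun N := by
  refine csSup_le ⟨c.toFun ∅, ⟨∅, ⟨isClosed_empty, empty_subset _⟩, rfl⟩⟩ ?_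
  rintro r ⟨K, ⟨hK, hKU⟩, rfl⟩
  exact c.mono' K N hK hN (hKU.trans hUN)

lemma Capacity.toFun_le_opensVal {X : Type*} [TopologicalSpace X] (c : Capacity X)
    {A U : Set X} (hA : IsClosed A) (hAU : A ⊆ U) : c.toFun A ≤ c.opensVal U := by
  refine le_csSup ⟨1, ?_⟩ ⟨A, ⟨hA, hAU⟩, rfl⟩
  rintro r ⟨K, ⟨hK, _⟩, rfl⟩
  exact (c.mono' K Set.univ hK isClosed_univ (subset_univ K)).trans c.univ'.le

/-- The set of totally balanced capacities is closed in `MX`. -/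
theorem isClosed_totallyBalanced_capacities (X : Type*) [TopologicalSpace X]
    [CompactSpace X] [T2Space X] :
    IsClosed {ν : Capacity X | ν.IsTotallyBalanced} := by
  rw [← isOpen_compl_iff, isOpen_iff_forall_mem_open]
  intro ν hν
  simp only [mem_compl_iff, mem_setOf_eq, Capacity.IsTotallyBalanced] at hν
  push_neg at hν
  obtain ⟨B, hB, n, lam, A, hlam, hAcl, hAB, hbal, hgt⟩ := hν
  classical
  set L : ℝ := ∑ i, lam i with hL
  have hL0 : 0 ≤ L := Finset.sum_nonneg fun i _ => hlam i
  set g : ℝ := (∑ i, lam i * ν.toFun (A i)) - ν.toFun B with hg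
  have hg0 : 0 < g := sub_pos.2 hgt
  set δ : ℝ := g / (L + 2) with hδdef
  have hδ0 : 0 < δ := div_pos hg0 (by linarith)
  have hδL : δ * (L + 2) = g := div_mul_cancel₀ g (by positivity)
  obtain ⟨O, hOo, hBO, hOs⟩ := ν.usc' B (ν.toFun B + δ) hB (by linarith)
  obtain ⟨U, hUo, hAU, hUc, hUT⟩ := aux_neighborhoods A hAcl O hOo
    (fun i => (hAB i).trans hBO)
  set N : Fin n → Set X := fun i => closure (U i) with hNdef
  have hNcl : ∀ i, IsClosed (N i) := fun _ => isClosed_closure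
  set B' : Set X := B ∪ ⋃ i, N i with hB'def
  have hB'cl : IsClosed B' := hB.union (isClosed_iUnion_of_finite hNcl)
  have hB'O : B' ⊆ O := union_subset hBO (iUnion_subset fun i => hUc i)
  have hνB' : ν.toFun B' < ν.toFun B + δ := hOs B' hB'cl.isCompact hB'O
  refine ⟨{c : Capacity X | c.toFun B' < ν.toFun B + δ} ∩
    ⋂ i, {c : Capacity X | ν.toFun (A i) - δ < c.opensVal (U i)}, ?_, ?_, ?_⟩
  · -- the neighborhood is contained in the complement
    rintro c ⟨hc1, hc2⟩ hcTB
    simp only [mem_setOf_eq] at hc1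
    simp only [mem_iInter, mem_setOf_eq] at hc2
    -- pointwise balance condition for the enlarged sets N
    have hbalN : ∀ x : X, ∑ i, lam i * (N i).indicator (fun _ => (1:ℝ)) x ≤ 1 := by
      intro x
      set T : Finset (Fin n) := Finset.univ.filter (fun i => x ∈ N i) with hT
      have hTne : (⋂ i ∈ T, A i) ≠ ∅ := by
        intro he
        have h2 := hUT T he
        rw [Set.eq_empty_iff_forall_notMem] at h2
        refine h2 x ?_
        simp only [mem_iInter]
        intro i hi
        exact (Finset.mem_filter.1 hi).2
      obtain ⟨y, hy⟩ := Set.nonempty_iff_ne_empty.2 hTne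
      simp only [mem_iInter] at hy
      have e1 : ∑ i, lam i * (N i).indicator (fun _ => (1:ℝ)) x = ∑ i ∈ T, lam i := by
        rw [hT, Finset.sum_filter]
        refine Finset.sum_congr rfl fun i _ => ?_
        by_cases hi : x ∈ N i <;> simp [Set.indicator_apply, hi]
      have e2 : ∑ i ∈ T, lam i ≤ ∑ i, lam i * (A i).indicator (fun _ => (1:ℝ)) y := by
        have e3 : ∑ i ∈ T, lam i = ∑ i ∈ T, lam i * (A i).indicator (fun _ => (1:ℝ)) y := by
          refine Finset.sum_congr rfl fun i hi => ?_
          rw [Set.indicator_of_mem (hy i hi), mul_one]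
        rw [e3]
        refine Finset.sum_le_sum_of_subset_of_nonneg (Finset.subset_univ T) ?_
        intro i _ _
        exact mul_nonneg (hlam i) (Set.indicator_nonneg (fun _ _ => one_pos.le) y)
      rw [e1]
      exact e2.trans (hbal y)
    have hsum : ∑ i, lam i * c.toFun (N i) ≤ c.toFun B' :=
      hcTB B' hB'cl n lam N hlam hNcl
        (fun i => subset_union_of_subset_right (subset_iUnion N i) B) hbalN
    have hlb : ∀ i, ν.toFun (A i) - δ < c.toFun (N i) := fun i =>
      (hc2 i).trans_le (c.opensVal_le_toFun (hNcl i) subset_closure)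
    have hmono : ∑ i, lam i * (ν.toFun (A i) - δ) ≤ ∑ i, lam i * c.toFun (N i) :=
      Finset.sum_le_sum fun i _ => mul_le_mul_of_nonneg_left (hlb i).le (hlam i)
    have expand : ∑ i, lam i * (ν.toFun (A i) - δ) =
        (∑ i, lam i * ν.toFun (A i)) - δ * L := by
      rw [hL, Finset.mul_sum]
      rw [← Finset.sum_sub_distrib]
      refine Finset.sum_congr rfl fun i _ => by ring
    rw [expand] at hmono
    -- δ * (L + 2) = g and g = ∑ - ν B give a contradiction
    have hsum' : (∑ i, lam i * ν.toFun (A i)) = ν.toFun B + g := by rw [hg]; ring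
    rw [hsum'] at hmono
    have : ν.toFun B + 2 * δ ≤ c.toFun B' := by nlinarith [hmono.trans hsum]
    linarith
  · -- the neighborhood is open
    refine IsOpen.inter ?_ (isOpen_iInter_of_finite fun i => ?_)
    · exact TopologicalSpace.isOpen_generateFrom_of_mem
        (Or.inl ⟨B', ν.toFun B + δ, hB'cl, rfl⟩)
    · exact TopologicalSpace.isOpen_generateFrom_of_mem
        (Or.inr ⟨U i, ν.toFun (A i) - δ, hUo i, rfl⟩)
  · -- ν belongs to the neighborhood
    refine ⟨hνB', ?_⟩
    simp only [mem_iInter, mem_setOf_eq]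
    intro i
    have := ν.toFun_le_opensVal (hAcl i) (hAU i)
    linarith
end

section
/- Let X be a compact Hausdorff space and ν an upper-semicontinuous capacity on X. Then core(ν) is nonempty if and only if ν is balanced, i.e., Σ λ_i ν(A_i) ≤ 1 whenever λ_1,…,λ_n ≥ 0 and A_1,…,A_n are closed subsets of X with Σ λ_i χ_{A_i} ≤ 1_X. -/
open Set MeasureTheory TopologicalSpace
open scoped NNReal

open scoped ENNReal BoundedContinuousFunction

set_option linter.unusedSectionVars false
set_option maxHeartbeats 1000000

namespace CoreBalAux

variable {X : Type*} [TopologicalSpace X] [CompactSpace X] [Nonempty X]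

noncomputable def pF (f : C(X, ℝ)) : ℝ := sSup (Set.range f)

lemma bddAbove_range (f : C(X, ℝ)) : BddAbove (Set.range f) := by
  have := (isCompact_univ (X := X)).bddAbove_image f.continuous.continuousOn
  simpa [Set.image_univ] using this

lemma le_pF (f : C(X, ℝ)) (x : X) : f x ≤ pF f :=
  le_csSup (bddAbove_range f) ⟨x, rfl⟩

lemma pF_le {f : C(X, ℝ)} {c : ℝ} (h : ∀ x, f x ≤ c) : pF f ≤ c :=
  csSup_le (Set.range_nonempty f) (by rintro _ ⟨x, rfl⟩; exact h x)

lemma pF_zero : pF (0 : C(X, ℝ)) = 0 :=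
  le_antisymm (pF_le fun x => le_rfl) ((le_pF 0 (Classical.arbitrary X)).trans_eq' rfl)

lemma pF_add_le (f g : C(X, ℝ)) : pF (f + g) ≤ pF f + pF g :=
  pF_le fun x => add_le_add (le_pF f x) (le_pF g x)

lemma pF_one : pF (1 : C(X, ℝ)) = 1 :=
  le_antisymm (pF_le fun x => le_rfl) (le_pF 1 (Classical.arbitrary X))

lemma pF_smul {c : ℝ} (hc : 0 < c) (f : C(X, ℝ)) : pF (c • f) = c * pF f := by
  refine le_antisymm (pF_le fun x => ?_) ?_
  · have : f x ≤ pF f := le_pF f x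
    calc (c • f) x = c * f x := rfl
    _ ≤ c * pF f := by nlinarith
  · rw [← le_div_iff₀' hc]
    refine pF_le fun x => ?_
    rw [le_div_iff₀' hc]
    exact (le_pF (c • f) x).trans_eq' rfl

variable (nu : Capacity X)

/-- the feasible values whose infimum defines the sublinear majorant -/
def NSet (f : C(X, ℝ)) : Set ℝ :=
  {r | ∃ (n : ℕ) (lam : Fin n → ℝ) (A : Fin n → Set X) (g : C(X, ℝ)),
    (∀ i, 0 ≤ lam i) ∧ (∀ i, IsClosed (A i)) ∧
    (∀ x, ∑ i, lam i * (A i).indicator (fun _ => (1 : ℝ)) x ≤ g x) ∧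
    r = pF (f + g) - ∑ i, lam i * nu.toFun (A i)}

noncomputable def NF (f : C(X, ℝ)) : ℝ := sInf (NSet nu f)

lemma sum_ind_nonneg {n : ℕ} {lam : Fin n → ℝ} (hlam : ∀ i, 0 ≤ lam i)
    (A : Fin n → Set X) (x : X) :
    0 ≤ ∑ i, lam i * (A i).indicator (fun _ => (1 : ℝ)) x :=
  Finset.sum_nonneg fun i _ => mul_nonneg (hlam i)
    (Set.indicator_nonneg (fun _ _ => zero_le_one) x)

/-- balancedness gives the key bound `∑ λᵢ ν(Aᵢ) ≤ sup g` -/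
lemma bal_le_pF (hb : nu.IsBalanced) {n : ℕ} {lam : Fin n → ℝ} {A : Fin n → Set X}
    {g : C(X, ℝ)} (hlam : ∀ i, 0 ≤ lam i) (hA : ∀ i, IsClosed (A i))
    (hg : ∀ x, ∑ i, lam i * (A i).indicator (fun _ => (1 : ℝ)) x ≤ g x) :
    ∑ i, lam i * nu.toFun (A i) ≤ pF g := by
  have hp0 : 0 ≤ pF g := by
    have x0 := Classical.arbitrary X
    exact le_trans (le_trans (sum_ind_nonneg hlam A x0) (hg x0)) (le_pF g x0)
  refine le_of_forall_pos_le_add fun ε hε => ?_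
  set c : ℝ := pF g + ε with hcdef
  have hc : 0 < c := by positivity
  have key := hb n (fun i => lam i / c) A (fun i => div_nonneg (hlam i) hc.le) hA ?_
  · have e : ∑ i, lam i * nu.toFun (A i) = c * ∑ i, lam i / c * nu.toFun (A i) := by
      rw [Finset.mul_sum]
      exact Finset.sum_congr rfl fun i _ => by field_simp
    rw [e]
    calc c * ∑ i, lam i / c * nu.toFun (A i) ≤ c * 1 := by
          have : ∑ i, lam i / c * nu.toFun (A i) ≤ 1 := key
          nlinarith
    _ = c := mul_one c
  · intro x
    have h1 : ∑ i, lam i / c * (A i).indicator (fun _ => (1 : ℝ)) x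
        = (∑ i, lam i * (A i).indicator (fun _ => (1 : ℝ)) x) / c := by
      rw [eq_div_iff hc.ne', Finset.sum_mul]
      exact Finset.sum_congr rfl fun i _ => by field_simp
    rw [h1, div_le_one hc]
    exact (hg x).trans (by have := le_pF g x; linarith)

lemma pF_mem_NSet (f : C(X, ℝ)) : pF f ∈ NSet nu f :=
  ⟨0, fun i => (1 : ℝ), fun i => ∅, 0, fun i => i.elim0, fun i => i.elim0,
    fun x => by simp, by simp⟩

lemma NSet_lb (hb : nu.IsBalanced) (f : C(X, ℝ)) :
    ∀ r ∈ NSet nu f, -pF (-f) ≤ r := by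
  rintro r ⟨n, lam, A, g, hlam, hA, hg, rfl⟩
  have h1 : ∑ i, lam i * nu.toFun (A i) ≤ pF g := bal_le_pF nu hb hlam hA hg
  have h2 : pF g ≤ pF (f + g) + pF (-f) := by
    refine le_trans (le_of_eq ?_) (pF_add_le (f + g) (-f))
    congr 1; abel
  linarith

lemma NSet_bddBelow (hb : nu.IsBalanced) (f : C(X, ℝ)) : BddBelow (NSet nu f) :=
  ⟨-pF (-f), NSet_lb nu hb f⟩

lemma NF_le_pF (hb : nu.IsBalanced) (f : C(X, ℝ)) : NF nu f ≤ pF f :=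
  csInf_le (NSet_bddBelow nu hb f) (pF_mem_NSet nu f)

lemma NF_nonneg_zero (hb : nu.IsBalanced) : 0 ≤ NF nu 0 := by
  refine le_csInf ⟨_, pF_mem_NSet nu 0⟩ fun r hr => ?_
  have := NSet_lb nu hb 0 r hr
  simpa [pF_zero] using this

lemma append_sum {n₁ n₂ : ℕ} (lam₁ : Fin n₁ → ℝ) (lam₂ : Fin n₂ → ℝ)
    (A₁ : Fin n₁ → Set X) (A₂ : Fin n₂ → Set X) (h : Set X → ℝ) :
    ∑ i, (Fin.append lam₁ lam₂) i * h ((Fin.append A₁ A₂) i)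
      = (∑ i, lam₁ i * h (A₁ i)) + ∑ i, lam₂ i * h (A₂ i) := by
  rw [Fin.sum_univ_add]
  simp [Fin.append_left, Fin.append_right]

lemma append_sum_ind {n₁ n₂ : ℕ} (lam₁ : Fin n₁ → ℝ) (lam₂ : Fin n₂ → ℝ)
    (A₁ : Fin n₁ → Set X) (A₂ : Fin n₂ → Set X) (x : X) :
    ∑ i, (Fin.append lam₁ lam₂) i * ((Fin.append A₁ A₂) i).indicator (fun _ => (1 : ℝ)) x
      = (∑ i, lam₁ i * (A₁ i).indicator (fun _ => (1 : ℝ)) x)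
        + ∑ i, lam₂ i * (A₂ i).indicator (fun _ => (1 : ℝ)) x := by
  rw [Fin.sum_univ_add]
  simp [Fin.append_left, Fin.append_right]

lemma add_mem_NSet {f₁ f₂ : C(X, ℝ)} {r₁ r₂ : ℝ}
    (h₁ : r₁ ∈ NSet nu f₁) (h₂ : r₂ ∈ NSet nu f₂) :
    ∃ r ∈ NSet nu (f₁ + f₂), r ≤ r₁ + r₂ := by
  obtain ⟨n₁, lam₁, A₁, g₁, hl₁, hA₁, hg₁, rfl⟩ := h₁
  obtain ⟨n₂, lam₂, A₂, g₂, hl₂, hA₂, hg₂, rfl⟩ := h₂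
  refine ⟨pF (f₁ + f₂ + (g₁ + g₂)) -
      ∑ i, (Fin.append lam₁ lam₂) i * nu.toFun ((Fin.append A₁ A₂) i),
    ⟨n₁ + n₂, Fin.append lam₁ lam₂, Fin.append A₁ A₂, g₁ + g₂, ?_, ?_, ?_, rfl⟩, ?_⟩
  · intro i
    refine Fin.addCases (fun j => ?_) (fun j => ?_) i
    · rw [Fin.append_left]; exact hl₁ j
    · rw [Fin.append_right]; exact hl₂ j
  · intro i
    refine Fin.addCases (fun j => ?_) (fun j => ?_) i
    · rw [Fin.append_left]; exact hA₁ j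
    · rw [Fin.append_right]; exact hA₂ j
  · intro x
    rw [append_sum_ind]
    exact add_le_add (hg₁ x) (hg₂ x)
  · rw [append_sum]
    have h3 : pF (f₁ + f₂ + (g₁ + g₂)) ≤ pF (f₁ + g₁) + pF (f₂ + g₂) := by
      refine le_trans (le_of_eq ?_) (pF_add_le (f₁ + g₁) (f₂ + g₂))
      congr 1; abel
    linarith

lemma NF_add (hb : nu.IsBalanced) (f₁ f₂ : C(X, ℝ)) :
    NF nu (f₁ + f₂) ≤ NF nu f₁ + NF nu f₂ := by
  have key : ∀ r₁ ∈ NSet nu f₁, ∀ r₂ ∈ NSet nu f₂, NF nu (f₁ + f₂) ≤ r₁ + r₂ := by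
    intro r₁ h₁ r₂ h₂
    obtain ⟨r, hr, hle⟩ := add_mem_NSet nu h₁ h₂
    exact (csInf_le (NSet_bddBelow nu hb _) hr).trans hle
  have h1 : ∀ r₁ ∈ NSet nu f₁, NF nu (f₁ + f₂) - r₁ ≤ NF nu f₂ := fun r₁ h₁ =>
    le_csInf ⟨_, pF_mem_NSet nu f₂⟩ fun r₂ h₂ => by linarith [key r₁ h₁ r₂ h₂]
  have h2 : NF nu (f₁ + f₂) - NF nu f₂ ≤ NF nu f₁ :=
    le_csInf ⟨_, pF_mem_NSet nu f₁⟩ fun r₁ h₁ => by linarith [h1 r₁ h₁]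
  linarith

lemma smul_mem_NSet {f : C(X, ℝ)} {r c : ℝ} (hc : 0 < c) (h : r ∈ NSet nu f) :
    c * r ∈ NSet nu (c • f) := by
  obtain ⟨n, lam, A, g, hl, hA, hg, rfl⟩ := h
  refine ⟨n, fun i => c * lam i, A, c • g, fun i => mul_nonneg hc.le (hl i), hA, fun x => ?_, ?_⟩
  · have h1 : ∑ i, c * lam i * (A i).indicator (fun _ => (1 : ℝ)) x
        = c * ∑ i, lam i * (A i).indicator (fun _ => (1 : ℝ)) x := by
      rw [Finset.mul_sum]; exact Finset.sum_congr rfl fun i _ => by ring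
    rw [h1]
    calc c * ∑ i, lam i * (A i).indicator (fun _ => (1 : ℝ)) x ≤ c * g x := by
          have := hg x; nlinarith
    _ = (c • g) x := rfl
  · have h1 : c • f + c • g = c • (f + g) := by rw [smul_add]
    rw [h1, pF_smul hc]
    have h2 : ∑ i, c * lam i * nu.toFun (A i) = c * ∑ i, lam i * nu.toFun (A i) := by
      rw [Finset.mul_sum]; exact Finset.sum_congr rfl fun i _ => by ring
    rw [h2]; ring

lemma NF_smul (hb : nu.IsBalanced) {c : ℝ} (hc : 0 < c) (f : C(X, ℝ)) :
    NF nu (c • f) = c * NF nu f := by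
  refine le_antisymm ?_ ?_
  · rw [← div_le_iff₀' hc]
    refine le_csInf ⟨_, pF_mem_NSet nu f⟩ fun r hr => ?_
    rw [div_le_iff₀' hc]
    exact csInf_le (NSet_bddBelow nu hb _) (smul_mem_NSet nu hc hr)
  · refine le_csInf ⟨_, pF_mem_NSet nu (c • f)⟩ fun r hr => ?_
    have h1 : c⁻¹ * r ∈ NSet nu f := by
      have := smul_mem_NSet nu (inv_pos.mpr hc) hr
      rwa [inv_smul_smul₀ hc.ne'] at this
    have h2 : NF nu f ≤ c⁻¹ * r := csInf_le (NSet_bddBelow nu hb f) h1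
    calc c * NF nu f ≤ c * (c⁻¹ * r) := by nlinarith
    _ = r := by field_simp

/-- The Hahn–Banach step: a positive normalized linear functional dominating `ν`. -/
lemma exists_functional (hb : nu.IsBalanced) :
    ∃ L : C(X, ℝ) →ₗ[ℝ] ℝ, (∀ f, L f ≤ pF f) ∧
      (∀ (A : Set X), IsClosed A → ∀ g : C(X, ℝ),
        (∀ x, A.indicator (fun _ => (1 : ℝ)) x ≤ g x) → nu.toFun A ≤ L g) := by
  have N_hom : ∀ c : ℝ, 0 < c → ∀ f : C(X, ℝ), NF nu (c • f) = c * NF nu f :=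
    fun c hc f => NF_smul nu hb hc f
  have N_add : ∀ f g : C(X, ℝ), NF nu (f + g) ≤ NF nu f + NF nu g := NF_add nu hb
  have hf : ∀ x : ((⟨⊥, 0⟩ : C(X, ℝ) →ₗ.[ℝ] ℝ)).domain,
      (⟨⊥, 0⟩ : C(X, ℝ) →ₗ.[ℝ] ℝ) x ≤ NF nu x := by
    rintro ⟨x, hx⟩
    have hx0 : x = 0 := by simpa using hx
    subst hx0
    simpa using NF_nonneg_zero nu hb
  obtain ⟨L, -, hL⟩ := exists_extension_of_le_sublinear ⟨⊥, 0⟩ (NF nu) N_hom N_add hf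
  refine ⟨L, fun f => (hL f).trans (NF_le_pF nu hb f), ?_⟩
  intro A hA g hg
  have hmem : (-(nu.toFun A)) ∈ NSet nu (-g) := by
    refine ⟨1, fun _ => 1, fun _ => A, g, fun i => zero_le_one, fun i => hA, fun x => ?_, ?_⟩
    · simpa using hg x
    · simp [pF_zero]
  have h1 : L (-g) ≤ -(nu.toFun A) :=
    (hL (-g)).trans (csInf_le (NSet_bddBelow nu hb _) hmem)
  have h2 : L (-g) = -(L g) := by rw [map_neg]
  linarith

section Riesz

variable [T2Space X]

/-- view a nonnegative bounded continuous function as a real continuous map -/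
noncomputable def toRealC (f : X →ᵇ ℝ≥0) : C(X, ℝ) :=
  ⟨fun x => ((f x : ℝ≥0) : ℝ), NNReal.continuous_coe.comp f.continuous⟩

lemma toRealC_apply (f : X →ᵇ ℝ≥0) (x : X) : toRealC f x = ((f x : ℝ≥0) : ℝ) := rfl

lemma exists_core_measure [MeasurableSpace X] [BorelSpace X] (hb : nu.IsBalanced) :
    ∃ μ : Measure X, IsProbabilityMeasure μ ∧ μ.Regular ∧
      ∀ A : Set X, IsClosed A → ENNReal.ofReal (nu.toFun A) ≤ μ A := by
  obtain ⟨L, hLp, hkey⟩ := exists_functional nu hb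
  -- positivity of L on nonnegative functions
  have hpos : ∀ f : X →ᵇ ℝ≥0, 0 ≤ L (toRealC f) := by
    intro f
    have h1 : L (-(toRealC f)) ≤ pF (-(toRealC f)) := hLp _
    have h2 : pF (-(toRealC f)) ≤ 0 := pF_le fun x => by
      simp only [ContinuousMap.neg_apply, toRealC_apply, neg_nonpos]
      exact (f x).2
    have h3 : L (-(toRealC f)) = -(L (toRealC f)) := map_neg L _
    linarith
  -- the `ℝ≥0`-linear functional
  set Λ : (X →ᵇ ℝ≥0) →ₗ[ℝ≥0] ℝ≥0 :=
    { toFun := fun f => ⟨L (toRealC f), hpos f⟩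
      map_add' := by
        intro f g
        ext
        have : toRealC (f + g) = toRealC f + toRealC g := by
          ext x; simp [toRealC_apply]
        simp [this, map_add]
        rfl
      map_smul' := by
        intro c f
        ext
        have : toRealC (c • f) = (c : ℝ) • toRealC f := by
          ext x; simp [toRealC_apply, NNReal.smul_def]
        simp [this, NNReal.smul_def, smul_eq_mul]
        rfl } with hΛ
  have hΛ_apply : ∀ f : X →ᵇ ℝ≥0, ((Λ f : ℝ≥0) : ℝ) = L (toRealC f) := fun f => rfl
  -- `Λ 1 = 1`
  have hL_one : L 1 = 1 := by
    have h1 : L 1 ≤ 1 := (hLp 1).trans_eq pF_one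
    have h2 : nu.toFun Set.univ ≤ L 1 := by
      refine hkey Set.univ isClosed_univ 1 fun x => ?_
      simp [Set.indicator_univ]
    rw [nu.univ'] at h2
    linarith
  have hΛ_one : Λ 1 = 1 := by
    ext
    rw [hΛ_apply]
    have : toRealC (1 : X →ᵇ ℝ≥0) = 1 := by ext x; simp [toRealC_apply]
    rw [this, hL_one]; rfl
  -- `Λ f ≥ ν A` whenever `f ≥ 1` on a closed set `A`
  have hΛ_ge : ∀ (A : Set X), IsClosed A → ∀ f : X →ᵇ ℝ≥0,
      (∀ x ∈ A, (1 : ℝ≥0) ≤ f x) → nu.toFun A ≤ ((Λ f : ℝ≥0) : ℝ) := by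
    intro A hA f hf
    rw [hΛ_apply]
    refine hkey A hA (toRealC f) fun x => ?_
    by_cases hx : x ∈ A
    · rw [Set.indicator_of_mem hx, toRealC_apply]
      exact_mod_cast hf x hx
    · rw [Set.indicator_of_notMem hx, toRealC_apply]
      exact (f x).2
  set Λc : CompactlySupportedContinuousMap X ℝ≥0 →ₗ[ℝ≥0] ℝ≥0 :=
    { toFun := fun f => Λ f.toBoundedContinuousFunction
      map_add' := fun f g => by rw [← map_add]; rfl
      map_smul' := fun c f => by rw [← map_smul]; rfl } with hΛc
  -- lower bound of the Riesz content by the capacity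
  have hcontent_ge : ∀ (A : Set X) (hA : IsClosed A),
      Real.toNNReal (nu.toFun A) ≤ rieszContentAux Λc ⟨A, hA.isCompact⟩ := by
    intro A hA
    refine le_csInf (rieszContentAux_image_nonempty Λc _) ?_
    rintro b ⟨f, hf, rfl⟩
    rw [Real.toNNReal_le_iff_le_coe]
    exact hΛ_ge A hA f.toBoundedContinuousFunction hf
  have hcontent_top : rieszContentAux Λc ⟨Set.univ, isCompact_univ⟩ = 1 := by
    refine le_antisymm ?_ ?_
    · have := rieszContentAux_le Λc (K := ⟨Set.univ, isCompact_univ⟩)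
        (f := CompactlySupportedContinuousMap.continuousMapEquiv 1) fun x _ => le_refl 1
      have hΛc_one : Λc (CompactlySupportedContinuousMap.continuousMapEquiv 1) = 1 := hΛ_one
      rwa [hΛc_one] at this
    · have := hcontent_ge Set.univ isClosed_univ
      rw [nu.univ'] at this
      simpa using this
  -- the content
  set C : Content X :=
    { toFun := fun K => rieszContentAux Λc K
      mono' := fun K₁ K₂ h => rieszContentAux_mono Λc h
      sup_le' := fun K₁ K₂ => rieszContentAux_sup_le Λc K₁ K₂
      sup_disjoint' := by
        intro K₁ K₂ hdisj _ _
        refine le_antisymm (rieszContentAux_sup_le Λc K₁ K₂) ?_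
        refine le_csInf (rieszContentAux_image_nonempty Λc _) ?_
        rintro b ⟨f, hf, rfl⟩
        obtain ⟨u, hu0, hu1, huI⟩ :=
          exists_continuous_zero_one_of_isCompact K₁.2 K₂.2.isClosed hdisj
        set v : C(X, ℝ≥0) := ⟨fun x => Real.toNNReal (1 - u x),
          continuous_real_toNNReal.comp (by continuity)⟩ with hv
        set w : C(X, ℝ≥0) := ⟨fun x => Real.toNNReal (u x),
          continuous_real_toNNReal.comp u.continuous⟩ with hw
        set g₁ : CompactlySupportedContinuousMap X ℝ≥0 :=
          CompactlySupportedContinuousMap.continuousMapEquiv (v * f.toContinuousMap)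
        set g₂ : CompactlySupportedContinuousMap X ℝ≥0 :=
          CompactlySupportedContinuousMap.continuousMapEquiv (w * f.toContinuousMap)
        have hsum : g₁ + g₂ = f := by
          ext x
          have h0 : 0 ≤ u x := (huI x).1
          have h1 : u x ≤ 1 := (huI x).2
          show ((v x * f.toContinuousMap x + w x * f.toContinuousMap x : ℝ≥0) : ℝ)
            = ((f x : ℝ≥0) : ℝ)
          push_cast
          have hv' : ((v x : ℝ≥0) : ℝ) = 1 - u x :=
            Real.coe_toNNReal _ (by linarith)
          have hw' : ((w x : ℝ≥0) : ℝ) = u x := Real.coe_toNNReal _ h0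
          rw [hv', hw']
          have : f.toContinuousMap x = f x := rfl
          rw [this]
          ring
        have hg₁ : ∀ x ∈ (K₁ : Set X), (1 : ℝ≥0) ≤ g₁ x := by
          intro x hx
          have hvx : v x = 1 := by
            ext
            rw [hv]
            simp [hu0 hx]
          show (1 : ℝ≥0) ≤ v x * f.toContinuousMap x
          rw [hvx, one_mul]
          exact hf x (Set.mem_union_left _ hx)
        have hg₂ : ∀ x ∈ (K₂ : Set X), (1 : ℝ≥0) ≤ g₂ x := by
          intro x hx
          have hwx : w x = 1 := by
            ext
            rw [hw]
            simp [hu1 hx]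
          show (1 : ℝ≥0) ≤ w x * f.toContinuousMap x
          rw [hwx, one_mul]
          exact hf x (Set.mem_union_right _ hx)
        calc rieszContentAux Λc K₁ + rieszContentAux Λc K₂ ≤ Λc g₁ + Λc g₂ :=
              add_le_add (rieszContentAux_le Λc hg₁) (rieszContentAux_le Λc hg₂)
        _ = Λc (g₁ + g₂) := (map_add Λc g₁ g₂).symm
        _ = Λc f := by rw [hsum] } with hC
  refine ⟨C.measure, ?_, C.regular, ?_⟩
  · constructor
    rw [C.measure_apply MeasurableSet.univ]
    have h1 : C.outerMeasure Set.univ = C.innerContent ⟨Set.univ, isOpen_univ⟩ :=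
      C.outerMeasure_opens ⟨Set.univ, isOpen_univ⟩
    rw [h1, C.innerContent_of_isCompact isCompact_univ isOpen_univ]
    show ((rieszContentAux Λc ⟨Set.univ, isCompact_univ⟩ : ℝ≥0) : ℝ≥0∞) = 1
    rw [hcontent_top]
    rfl
  · intro A hA
    rw [C.measure_apply hA.measurableSet]
    refine le_trans ?_ (C.le_outerMeasure_compacts ⟨A, hA.isCompact⟩)
    show ENNReal.ofReal (nu.toFun A) ≤ ((rieszContentAux Λc ⟨A, hA.isCompact⟩ : ℝ≥0) : ℝ≥0∞)
    rw [show ENNReal.ofReal (nu.toFun A) = ((Real.toNNReal (nu.toFun A) : ℝ≥0) : ℝ≥0∞) from rfl]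
    exact_mod_cast hcontent_ge A hA

end Riesz

end CoreBalAux

/-- The core of a capacity is nonempty iff the capacity is balanced. -/
theorem core_nonempty_iff_balanced (X : Type*) [TopologicalSpace X]
    [CompactSpace X] [T2Space X] [MeasurableSpace X] [BorelSpace X] (nu : Capacity X) :
    nu.core.Nonempty ↔ nu.IsBalanced := by
  constructor
  · rintro ⟨μ, hreg, hdom⟩
    intro n lam A hlam hA hle
    haveI : IsProbabilityMeasure μ.toMeasure := μ.2
    set m := μ.toMeasure with hm
    have hint : ∀ i : Fin n,
        Integrable (fun x => lam i * (A i).indicator (fun _ => (1 : ℝ)) x) m := fun i =>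
      ((integrable_const (1 : ℝ)).indicator (hA i).measurableSet).const_mul (lam i)
    have hI : ∫ x, (∑ i, lam i * (A i).indicator (fun _ => (1 : ℝ)) x) ∂m
        = ∑ i, lam i * (m (A i)).toReal := by
      rw [integral_finset_sum _ fun i _ => hint i]
      refine Finset.sum_congr rfl fun i _ => ?_
      rw [integral_const_mul, integral_indicator_const (1 : ℝ) (hA i).measurableSet]
      simp [Measure.real]
    have hle2 : ∫ x, (∑ i, lam i * (A i).indicator (fun _ => (1 : ℝ)) x) ∂m
        ≤ ∫ _x, (1 : ℝ) ∂m :=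
      integral_mono (integrable_finset_sum _ fun i _ => hint i) (integrable_const 1) hle
    rw [hI, integral_const] at hle2
    simp only [measure_univ, probReal_univ, ENNReal.toReal_one, smul_eq_mul, one_mul] at hle2
    refine le_trans (Finset.sum_le_sum fun i _ => ?_) hle2
    exact mul_le_mul_of_nonneg_left (hdom (A i) (hA i)) (hlam i)
  · intro hb
    have hne : Nonempty X := by
      by_contra h
      rw [not_nonempty_iff] at h
      have h1 := nu.univ'
      rw [Set.univ_eq_empty_iff.mpr h, nu.empty'] at h1
      norm_num at h1
    obtain ⟨m, hprob, hreg, hdom⟩ := CoreBalAux.exists_core_measure nu hb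
    refine ⟨⟨m, hprob⟩, hreg, fun A hA => ?_⟩
    have h1 := hdom A hA
    have h2 : (ENNReal.ofReal (nu.toFun A)).toReal ≤ (m A).toReal :=
      ENNReal.toReal_mono (measure_ne_top m A) h1
    have h0 : 0 ≤ nu.toFun A := by
      have := nu.mono' ∅ A isClosed_empty hA (Set.empty_subset A)
      rwa [nu.empty'] at this
    rw [ENNReal.toReal_ofReal h0] at h2
    exact h2
end

section
/- Let X be a compact Hausdorff space and ν a convex upper-semicontinuous capacity on X (i.e., ν(A ∪ B) + ν(A ∩ B) ≥ ν(A) + ν(B) for all closed A, B). Then ν is exact: for every closed B ⊆ X there exists a regular Borel probability measure μ with μ(A) ≥ ν(A) for all closed A ⊆ X and μ(B) = ν(B). -/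
open Set MeasureTheory TopologicalSpace
open scoped NNReal

open scoped ENNReal

namespace CCP

variable {X : Type*} [TopologicalSpace X]

noncomputable def nus (ν : Capacity X) (A : Set X) : ℝ :=
  sSup (ν.toFun '' {K : Set X | IsClosed K ∧ K ⊆ A})

lemma nu_nonneg (ν : Capacity X) {F : Set X} (hF : IsClosed F) : 0 ≤ ν.toFun F := by
  have h := ν.mono' ∅ F isClosed_empty hF (Set.empty_subset F)
  rwa [ν.empty'] at h

lemma nu_le_one (ν : Capacity X) {F : Set X} (hF : IsClosed F) : ν.toFun F ≤ 1 := by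
  have h := ν.mono' F Set.univ hF isClosed_univ (Set.subset_univ F)
  rwa [ν.univ'] at h

lemma nus_set_nonempty (ν : Capacity X) (A : Set X) :
    (ν.toFun '' {K : Set X | IsClosed K ∧ K ⊆ A}).Nonempty :=
  ⟨ν.toFun ∅, ⟨∅, ⟨isClosed_empty, Set.empty_subset A⟩, rfl⟩⟩

lemma nus_bddAbove (ν : Capacity X) (A : Set X) :
    BddAbove (ν.toFun '' {K : Set X | IsClosed K ∧ K ⊆ A}) := by
  refine ⟨1, ?_⟩
  rintro r ⟨K, hK, rfl⟩
  exact nu_le_one ν hK.1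

lemma le_nus (ν : Capacity X) {F A : Set X} (hF : IsClosed F) (h : F ⊆ A) :
    ν.toFun F ≤ nus ν A :=
  le_csSup (nus_bddAbove ν A) ⟨F, ⟨hF, h⟩, rfl⟩

lemma nus_le (ν : Capacity X) {A : Set X} {c : ℝ}
    (h : ∀ F : Set X, IsClosed F → F ⊆ A → ν.toFun F ≤ c) : nus ν A ≤ c := by
  refine csSup_le (nus_set_nonempty ν A) ?_
  rintro r ⟨K, hK, rfl⟩
  exact h K hK.1 hK.2

lemma nus_nonneg (ν : Capacity X) (A : Set X) : 0 ≤ nus ν A := by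
  have h := le_nus ν isClosed_empty (Set.empty_subset A)
  rwa [ν.empty'] at h

lemma nus_le_one (ν : Capacity X) (A : Set X) : nus ν A ≤ 1 :=
  nus_le ν fun _ hF _ => nu_le_one ν hF

lemma nus_mono (ν : Capacity X) {A B : Set X} (h : A ⊆ B) : nus ν A ≤ nus ν B :=
  nus_le ν fun _ hF hFA => le_nus ν hF (hFA.trans h)

lemma nus_closed (ν : Capacity X) {F : Set X} (hF : IsClosed F) : nus ν F = ν.toFun F :=
  le_antisymm (nus_le ν fun G hG hGF => ν.mono' G F hG hF hGF) (le_nus ν hF subset_rfl)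

lemma nus_empty (ν : Capacity X) : nus ν (∅ : Set X) = 0 := by
  rw [nus_closed ν isClosed_empty, ν.empty']

lemma nus_univ (ν : Capacity X) : nus ν (Set.univ : Set X) = 1 := by
  rw [nus_closed ν isClosed_univ, ν.univ']

lemma nus_supermod (ν : Capacity X) (hconv : ν.IsConvexCap) (A B : Set X) :
    nus ν A + nus ν B ≤ nus ν (A ∪ B) + nus ν (A ∩ B) := by
  have h1 : nus ν A ≤ (nus ν (A ∪ B) + nus ν (A ∩ B)) - nus ν B := by
    refine nus_le ν fun F hF hFA => ?_
    have h2 : nus ν B ≤ (nus ν (A ∪ B) + nus ν (A ∩ B)) - ν.toFun F := by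
      refine nus_le ν fun G hG hGB => ?_
      have h3 := hconv F G hF hG
      have e1 := le_nus ν (hF.union hG) (Set.union_subset_union hFA hGB)
      have e2 := le_nus ν (hF.inter hG) (Set.inter_subset_inter hFA hGB)
      linarith
    linarith
  linarith

/-! ### The layer-cake (Choquet) integral -/

def lev (f : X → ℝ) (t : ℝ) : Set X := {x | t ≤ f x}

lemma lev_mono (f : X → ℝ) : Antitone (lev f) := by
  intro s t hst x hx
  exact le_trans hst hx

noncomputable def glev (ν : Capacity X) (f : X → ℝ) (t : ℝ) : ℝ := nus ν (lev f t)

lemma glev_antitone (ν : Capacity X) (f : X → ℝ) : Antitone (glev ν f) :=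
  fun s t hst => nus_mono ν (lev_mono f hst)

noncomputable def W (ν : Capacity X) (f : X → ℝ) (t : ℝ) : ℝ :=
  glev ν f t - Set.indicator (Set.Iic (0:ℝ)) (fun _ => (1:ℝ)) t

noncomputable def chq (ν : Capacity X) (f : X → ℝ) : ℝ := ∫ t, W ν f t

def Bdd (f : X → ℝ) : Prop := ∃ M : ℝ, 0 ≤ M ∧ ∀ x, |f x| ≤ M

lemma Bdd.add {f g : X → ℝ} (hf : Bdd f) (hg : Bdd g) : Bdd (fun x => f x + g x) := by
  obtain ⟨M, hM, hfM⟩ := hf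
  obtain ⟨N, hN, hgN⟩ := hg
  exact ⟨M + N, by linarith, fun x => (abs_add_le _ _).trans (add_le_add (hfM x) (hgN x))⟩

lemma Bdd.const (c : ℝ) : Bdd (fun _ : X => c) := ⟨|c|, abs_nonneg c, fun _ => le_rfl⟩

lemma Bdd.indicator (A : Set X) : Bdd (A.indicator fun _ => (1:ℝ)) := by
  classical
  refine ⟨1, zero_le_one, fun x => ?_⟩
  rw [Set.indicator_apply]
  split_ifs <;> simp

lemma Bdd.smul {f : X → ℝ} (c : ℝ) (hf : Bdd f) : Bdd (fun x => c * f x) := by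
  obtain ⟨M, hM, hfM⟩ := hf
  refine ⟨|c| * M, mul_nonneg (abs_nonneg c) hM, fun x => ?_⟩
  rw [abs_mul]
  exact mul_le_mul_of_nonneg_left (hfM x) (abs_nonneg c)

lemma Bdd.neg {f : X → ℝ} (hf : Bdd f) : Bdd (fun x => -f x) := by
  obtain ⟨M, hM, hfM⟩ := hf
  exact ⟨M, hM, fun x => by rw [abs_neg]; exact hfM x⟩

/-! ### Integrability of layer functions -/

lemma layer_bounds {H : ℝ → ℝ} (hH : Antitone H) {a M : ℝ} (hM : 0 ≤ M)
    (h1 : ∀ t ≤ -M, H t = a) (h2 : ∀ t, M < t → H t = 0) :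
    (0 ≤ a) ∧ (∀ t, 0 ≤ H t ∧ H t ≤ a) := by
  have ha : 0 ≤ a := by
    have := hH (show -M ≤ M + 1 by linarith)
    rw [h1 (-M) le_rfl, h2 (M+1) (by linarith)] at this
    exact this
  refine ⟨ha, fun t => ⟨?_, ?_⟩⟩
  · rcases le_or_gt t (M+1) with h | h
    · have := hH h
      rwa [h2 (M+1) (by linarith)] at this
    · rw [h2 t (by linarith)]
  · rcases le_or_gt t (-M) with h | h
    · rw [h1 t h]
    · have := hH h.le
      rwa [h1 (-M) le_rfl] at this

lemma integrable_layer {H : ℝ → ℝ} (hH : Antitone H) {a M : ℝ} (hM : 0 ≤ M)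
    (h1 : ∀ t ≤ -M, H t = a) (h2 : ∀ t, M < t → H t = 0) :
    Integrable (fun t => H t - Set.indicator (Set.Iic (0:ℝ)) (fun _ => a) t) := by
  obtain ⟨ha, hbd⟩ := layer_bounds hH hM h1 h2
  set g := fun t => H t - Set.indicator (Set.Iic (0:ℝ)) (fun _ => a) t with hg
  have hmeas : Measurable g := (hH.measurable).sub (measurable_const.indicator measurableSet_Iic)
  have hvanish : ∀ t, t ∉ Set.Icc (-M) M → g t = 0 := by
    intro t ht
    rw [Set.mem_Icc, not_and_or, not_le, not_le] at ht
    rcases ht with ht | ht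
    · rw [hg]
      simp only
      rw [h1 t ht.le, Set.indicator_of_mem (Set.mem_Iic.2 (by linarith)), sub_self]
    · rw [hg]
      simp only
      rw [h2 t ht, Set.indicator_of_notMem (fun hmem => absurd (Set.mem_Iic.1 hmem) (not_le.2 (by linarith))), sub_self]
  have hgind : g = Set.indicator (Set.Icc (-M) M) g := by
    funext t
    by_cases ht : t ∈ Set.Icc (-M) M
    · rw [Set.indicator_of_mem ht]
    · rw [Set.indicator_of_notMem ht, hvanish t ht]
  rw [hgind]
  refine IntegrableOn.integrable_indicator ?_ measurableSet_Icc
  refine Measure.integrableOn_of_bounded (M := a) measure_Icc_lt_top.ne hmeas.aestronglyMeasurable ?_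
  refine Filter.Eventually.of_forall fun t => ?_
  rw [Real.norm_eq_abs, abs_le]
  by_cases ht : t ∈ Set.Iic (0:ℝ)
  · rw [hg]; simp only; rw [Set.indicator_of_mem ht]
    constructor <;> linarith [(hbd t).1, (hbd t).2]
  · rw [hg]; simp only; rw [Set.indicator_of_notMem ht]
    constructor <;> linarith [(hbd t).1, (hbd t).2]

lemma layer_shift {H : ℝ → ℝ} (hH : Antitone H) {a M : ℝ} (hM : 0 ≤ M)
    (h1 : ∀ t ≤ -M, H t = a) (h2 : ∀ t, M < t → H t = 0) {c : ℝ} (hc : 0 ≤ c) :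
    Integrable (fun t => H (t - c) - H t) ∧ (∫ t, (H (t - c) - H t)) = c * a := by
  have hint : Integrable (fun t => H t - Set.indicator (Set.Iic (0:ℝ)) (fun _ => a) t) :=
    integrable_layer hH hM h1 h2
  have hint2 : Integrable (fun t => H (t - c) - Set.indicator (Set.Iic (0:ℝ)) (fun _ => a) (t - c)) :=
    hint.comp_sub_right c
  have hindint : Integrable (Set.indicator (Set.Ioc (0:ℝ) c) (fun _ => a)) := by
    refine IntegrableOn.integrable_indicator ?_ measurableSet_Ioc
    exact integrableOn_const measure_Ioc_lt_top.ne
  have hind : ∀ t, Set.indicator (Set.Iic (0:ℝ)) (fun _ => a) (t - c)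
      - Set.indicator (Set.Iic (0:ℝ)) (fun _ => a) t
      = Set.indicator (Set.Ioc (0:ℝ) c) (fun _ => a) t := by
    intro t
    rcases le_or_gt t 0 with h0 | h0
    · rw [Set.indicator_of_mem (Set.mem_Iic.2 (by linarith : t - c ≤ 0)),
        Set.indicator_of_mem (Set.mem_Iic.2 h0),
        Set.indicator_of_notMem (fun hmem => absurd (Set.mem_Ioc.1 hmem).1 (not_lt.2 h0))]
      ring
    · rcases le_or_gt t c with h1' | h1'
      · rw [Set.indicator_of_mem (Set.mem_Iic.2 (by linarith : t - c ≤ 0)),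
          Set.indicator_of_notMem (fun hmem => absurd (Set.mem_Iic.1 hmem) (not_le.2 h0)),
          Set.indicator_of_mem (Set.mem_Ioc.2 ⟨h0, h1'⟩)]
        ring
      · rw [Set.indicator_of_notMem
            (fun hmem => absurd (Set.mem_Iic.1 hmem) (not_le.2 (by linarith : (0:ℝ) < t - c))),
          Set.indicator_of_notMem (fun hmem => absurd (Set.mem_Iic.1 hmem) (not_le.2 h0)),
          Set.indicator_of_notMem (fun hmem => absurd (Set.mem_Ioc.1 hmem).2 (not_le.2 h1'))]
        ring
  have hvu : Integrable (fun t => (H (t - c) - Set.indicator (Set.Iic (0:ℝ)) (fun _ => a) (t - c))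
      - (H t - Set.indicator (Set.Iic (0:ℝ)) (fun _ => a) t)) := hint2.sub hint
  have heq : (fun t => H (t - c) - H t)
      = fun t => ((H (t - c) - Set.indicator (Set.Iic (0:ℝ)) (fun _ => a) (t - c))
          - (H t - Set.indicator (Set.Iic (0:ℝ)) (fun _ => a) t))
          + Set.indicator (Set.Ioc (0:ℝ) c) (fun _ => a) t := by
    funext t
    rw [← hind t]
    ring
  have e1 : (∫ t, (((H (t - c) - Set.indicator (Set.Iic (0:ℝ)) (fun _ => a) (t - c))
          - (H t - Set.indicator (Set.Iic (0:ℝ)) (fun _ => a) t))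
          + Set.indicator (Set.Ioc (0:ℝ) c) (fun _ => a) t))
      = (∫ t, ((H (t - c) - Set.indicator (Set.Iic (0:ℝ)) (fun _ => a) (t - c))
          - (H t - Set.indicator (Set.Iic (0:ℝ)) (fun _ => a) t)))
        + ∫ t, Set.indicator (Set.Ioc (0:ℝ) c) (fun _ => a) t := integral_add hvu hindint
  have e2 : (∫ t, ((H (t - c) - Set.indicator (Set.Iic (0:ℝ)) (fun _ => a) (t - c))
          - (H t - Set.indicator (Set.Iic (0:ℝ)) (fun _ => a) t)))
      = (∫ t, (H (t - c) - Set.indicator (Set.Iic (0:ℝ)) (fun _ => a) (t - c)))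
        - ∫ t, (H t - Set.indicator (Set.Iic (0:ℝ)) (fun _ => a) t) := integral_sub hint2 hint
  have e3 : (∫ t, (H (t - c) - Set.indicator (Set.Iic (0:ℝ)) (fun _ => a) (t - c)))
      = ∫ t, (H t - Set.indicator (Set.Iic (0:ℝ)) (fun _ => a) t) :=
    integral_sub_right_eq_self (fun t => H t - Set.indicator (Set.Iic (0:ℝ)) (fun _ => a) t) c
  have e4 : (∫ t, Set.indicator (Set.Ioc (0:ℝ) c) (fun _ => a) t) = c * a := by
    rw [integral_indicator measurableSet_Ioc, setIntegral_const, Real.volume_real_Ioc_of_le hc, smul_eq_mul,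
      show c - 0 = c by ring]
  constructor
  · rw [heq]
    exact hvu.add hindint
  · rw [heq, e1, e2, e3, sub_self, zero_add, e4]


/-! ### Basic properties of `chq` -/

lemma glev_tail_low (ν : Capacity X) {f : X → ℝ} {M : ℝ} (hfM : ∀ x, |f x| ≤ M) :
    ∀ t ≤ -M, glev ν f t = 1 := by
  intro t ht
  have : lev f t = Set.univ := by
    refine Set.eq_univ_of_forall fun x => ?_
    have := (abs_le.1 (hfM x)).1
    exact le_trans ht this
  rw [glev, this, nus_univ]

lemma glev_tail_high (ν : Capacity X) {f : X → ℝ} {M : ℝ} (hfM : ∀ x, |f x| ≤ M) :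
    ∀ t, M < t → glev ν f t = 0 := by
  intro t ht
  have : lev f t = ∅ := by
    refine Set.eq_empty_of_forall_notMem fun x hx => ?_
    have := (abs_le.1 (hfM x)).2
    have hx' : t ≤ f x := hx
    linarith
  rw [glev, this, nus_empty]

lemma W_integrable (ν : Capacity X) {f : X → ℝ} (hf : Bdd f) : Integrable (W ν f) := by
  obtain ⟨M, hM0, hfM⟩ := hf
  exact integrable_layer (glev_antitone ν f) hM0 (glev_tail_low ν hfM) (glev_tail_high ν hfM)

lemma chq_nonneg (ν : Capacity X) {f : X → ℝ} (hf0 : ∀ x, 0 ≤ f x) : 0 ≤ chq ν f := by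
  refine integral_nonneg fun t => ?_
  rw [W]
  rcases le_or_gt t 0 with h0 | h0
  · have : lev f t = Set.univ := Set.eq_univ_of_forall fun x => le_trans h0 (hf0 x)
    rw [glev, this, nus_univ, Set.indicator_of_mem (Set.mem_Iic.2 h0)]
    norm_num
  · rw [Set.indicator_of_notMem (fun hm => absurd (Set.mem_Iic.1 hm) (not_le.2 h0)), sub_zero]
    exact nus_nonneg ν _

lemma chq_zero (ν : Capacity X) : chq ν (fun _ => (0:ℝ)) = 0 := by
  have hW : W ν (fun _ => (0:ℝ)) = fun _ => (0:ℝ) := by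
    funext t
    rw [W]
    rcases le_or_gt t 0 with h0 | h0
    · have : lev (fun _ : X => (0:ℝ)) t = Set.univ := Set.eq_univ_of_forall fun x => h0
      rw [glev, this, nus_univ, Set.indicator_of_mem (Set.mem_Iic.2 h0)]
      norm_num
    · have : lev (fun _ : X => (0:ℝ)) t = ∅ :=
        Set.eq_empty_of_forall_notMem fun x hx => absurd (le_trans hx le_rfl) (not_le.2 h0)
      rw [glev, this, nus_empty,
        Set.indicator_of_notMem (fun hm => absurd (Set.mem_Iic.1 hm) (not_le.2 h0))]
      norm_num
  rw [chq, hW, integral_zero]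

lemma chq_add_const_nonneg (ν : Capacity X) {f : X → ℝ} (hf : Bdd f) {c : ℝ} (hc : 0 ≤ c) :
    chq ν (fun x => f x + c) = chq ν f + c := by
  obtain ⟨M, hM0, hfM⟩ := hf
  have hglev : ∀ t, glev ν (fun x => f x + c) t = glev ν f (t - c) := by
    intro t
    rw [glev, glev]
    congr 1
    ext x
    simp only [lev, Set.mem_setOf_eq]
    constructor <;> intro h <;> linarith
  obtain ⟨hshint, hshval⟩ := layer_shift (glev_antitone ν f) hM0 (glev_tail_low ν hfM)
    (glev_tail_high ν hfM) hc
  have hWeq : W ν (fun x => f x + c) = fun t => (glev ν f (t - c) - glev ν f t) + W ν f t := by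
    funext t
    rw [W, hglev t, W]
    ring
  have e1 : (∫ t, ((glev ν f (t - c) - glev ν f t) + W ν f t))
      = (∫ t, (glev ν f (t - c) - glev ν f t)) + ∫ t, W ν f t :=
    integral_add hshint (W_integrable ν ⟨M, hM0, hfM⟩)
  rw [chq, hWeq, e1, hshval, mul_one]
  rw [chq]
  ring

lemma chq_add_const (ν : Capacity X) {f : X → ℝ} (hf : Bdd f) (c : ℝ) :
    chq ν (fun x => f x + c) = chq ν f + c := by
  rcases le_or_gt 0 c with hc | hc
  · exact chq_add_const_nonneg ν hf hc
  · obtain ⟨M, hM0, hfM⟩ := hf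
    have hfc : Bdd (fun x => f x + c) := Bdd.add ⟨M, hM0, hfM⟩ (Bdd.const c)
    have h := chq_add_const_nonneg ν hfc (show 0 ≤ -c by linarith)
    have he : (fun x => (f x + c) + -c) = f := by funext x; ring
    rw [he] at h
    linarith

lemma chq_const (ν : Capacity X) (c : ℝ) : chq ν (fun _ : X => c) = c := by
  have h := chq_add_const ν (Bdd.const (0:ℝ)) c
  have he : (fun x : X => (fun _ : X => (0:ℝ)) x + c) = fun _ : X => c := by funext x; simp
  rw [he, chq_zero ν, zero_add] at h
  exact h

lemma chq_mono (ν : Capacity X) {f g : X → ℝ} (hf : Bdd f) (hg : Bdd g)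
    (h : ∀ x, f x ≤ g x) : chq ν f ≤ chq ν g := by
  refine integral_mono (W_integrable ν hf) (W_integrable ν hg) fun t => ?_
  have hsub : lev f t ⊆ lev g t := fun x hx => le_trans hx (h x)
  have := nus_mono ν hsub
  rw [W, W]
  unfold glev
  linarith

lemma chq_smul (ν : Capacity X) (f : X → ℝ) {c : ℝ} (hc : 0 < c) :
    chq ν (fun x => c * f x) = c * chq ν f := by
  have hW : (fun t => W ν (fun x => c * f x) t) = fun t => W ν f (c⁻¹ * t) := by
    funext t
    rw [W, W]
    have hlev : lev (fun x => c * f x) t = lev f (c⁻¹ * t) := by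
      ext x
      simp only [lev, Set.mem_setOf_eq]
      rw [inv_mul_le_iff₀ hc]
    have hind : Set.indicator (Set.Iic (0:ℝ)) (fun _ => (1:ℝ)) t
        = Set.indicator (Set.Iic (0:ℝ)) (fun _ => (1:ℝ)) (c⁻¹ * t) := by
      rcases le_or_gt t 0 with h0 | h0
      · rw [Set.indicator_of_mem (Set.mem_Iic.2 h0),
          Set.indicator_of_mem (Set.mem_Iic.2 (mul_nonpos_of_nonneg_of_nonpos (inv_pos.2 hc).le h0))]
      · rw [Set.indicator_of_notMem (fun hm => absurd (Set.mem_Iic.1 hm) (not_le.2 h0)),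
          Set.indicator_of_notMem (fun hm => absurd (Set.mem_Iic.1 hm)
            (not_le.2 (mul_pos (inv_pos.2 hc) h0)))]
    rw [glev, glev, hlev, hind]
  have := MeasureTheory.Measure.integral_comp_inv_mul_left (W ν f) c
  rw [chq, hW, this, chq, abs_of_pos hc, smul_eq_mul]

lemma chq_indicator (ν : Capacity X) (A : Set X) :
    chq ν (A.indicator fun _ => (1:ℝ)) = nus ν A := by
  have hW : W ν (A.indicator fun _ => (1:ℝ))
      = Set.indicator (Set.Ioc (0:ℝ) 1) (fun _ => nus ν A) := by
    funext t
    rw [W]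
    rcases le_or_gt t 0 with h0 | h0
    · have hlev : lev (A.indicator fun _ => (1:ℝ)) t = Set.univ :=
        Set.eq_univ_of_forall fun x => le_trans h0 (Set.indicator_nonneg (fun _ _ => zero_le_one) x)
      rw [glev, hlev, nus_univ, Set.indicator_of_mem (Set.mem_Iic.2 h0),
        Set.indicator_of_notMem (fun hm => absurd (Set.mem_Ioc.1 hm).1 (not_lt.2 h0))]
      norm_num
    · rcases le_or_gt t 1 with h1 | h1
      · have hlev : lev (A.indicator fun _ => (1:ℝ)) t = A := by
          ext x
          simp only [lev, Set.mem_setOf_eq]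
          constructor
          · intro hx
            by_contra hxA
            rw [Set.indicator_of_notMem hxA] at hx
            linarith
          · intro hx
            rw [Set.indicator_of_mem hx]
            exact h1
        rw [glev, hlev, Set.indicator_of_notMem (fun hm => absurd (Set.mem_Iic.1 hm) (not_le.2 h0)),
          Set.indicator_of_mem (Set.mem_Ioc.2 ⟨h0, h1⟩), sub_zero]
      · have hlev : lev (A.indicator fun _ => (1:ℝ)) t = ∅ := by
          refine Set.eq_empty_of_forall_notMem fun x hx => ?_
          have hx' : t ≤ A.indicator (fun _ => (1:ℝ)) x := hx
          have : A.indicator (fun _ => (1:ℝ)) x ≤ 1 := by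
            classical
            rw [Set.indicator_apply]
            split_ifs <;> norm_num
          linarith
        rw [glev, hlev, nus_empty,
          Set.indicator_of_notMem (fun hm => absurd (Set.mem_Iic.1 hm) (not_le.2 h0)),
          Set.indicator_of_notMem (fun hm => absurd (Set.mem_Ioc.1 hm).2 (not_le.2 h1))]
        norm_num
  rw [chq, hW, integral_indicator measurableSet_Ioc, setIntegral_const, Real.volume_real_Ioc_of_le zero_le_one,
    smul_eq_mul, show (1:ℝ) - 0 = 1 by ring, one_mul]


/-! ### The key supermodularity inequality and tower identities -/

lemma chq_key (ν : Capacity X) (hconv : ν.IsConvexCap) {f : X → ℝ} (hf : Bdd f)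
    (A : Set X) {c : ℝ} (hc : 0 ≤ c) :
    chq ν f + c * nus ν A ≤ chq ν (fun x => f x + c * A.indicator (fun _ => (1:ℝ)) x) := by
  obtain ⟨M, hM0, hfM⟩ := hf
  set H : ℝ → ℝ := fun t => nus ν (A ∩ lev f t) with hH
  have hHanti : Antitone H := fun s t hst =>
    nus_mono ν (Set.inter_subset_inter_right A (lev_mono f hst))
  have h1 : ∀ t ≤ -M, H t = nus ν A := by
    intro t ht
    have : lev f t = Set.univ := by
      refine Set.eq_univ_of_forall fun x => le_trans ht (abs_le.1 (hfM x)).1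
    rw [hH]
    simp only
    rw [this, Set.inter_univ]
  have h2 : ∀ t, M < t → H t = 0 := by
    intro t ht
    have : lev f t = ∅ := by
      refine Set.eq_empty_of_forall_notMem fun x hx => ?_
      have hx' : t ≤ f x := hx
      have := (abs_le.1 (hfM x)).2
      linarith
    rw [hH]
    simp only
    rw [this, Set.inter_empty, nus_empty]
  obtain ⟨hshint, hshval⟩ := layer_shift hHanti hM0 h1 h2 hc
  have hfc : Bdd (fun x => f x + c * A.indicator (fun _ => (1:ℝ)) x) :=
    Bdd.add ⟨M, hM0, hfM⟩ (Bdd.smul c (Bdd.indicator A))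
  have hpt : ∀ t, W ν f t + (H (t - c) - H t)
      ≤ W ν (fun x => f x + c * A.indicator (fun _ => (1:ℝ)) x) t := by
    intro t
    rw [W, W]
    have hind0 : (0:ℝ) ≤ 1 := zero_le_one
    suffices h : glev ν f t + (H (t - c) - H t)
        ≤ glev ν (fun x => f x + c * A.indicator (fun _ => (1:ℝ)) x) t by linarith
    have hsub : lev f t ∪ (A ∩ lev f (t - c))
        ⊆ lev (fun x => f x + c * A.indicator (fun _ => (1:ℝ)) x) t := by
      rintro x (hx | ⟨hxA, hx⟩)
      · have hx' : t ≤ f x := hx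
        have hnn : 0 ≤ c * A.indicator (fun _ => (1:ℝ)) x :=
          mul_nonneg hc (Set.indicator_nonneg (fun _ _ => zero_le_one) x)
        show t ≤ f x + c * A.indicator (fun _ => (1:ℝ)) x
        linarith
      · have hx' : t - c ≤ f x := hx
        show t ≤ f x + c * A.indicator (fun _ => (1:ℝ)) x
        rw [Set.indicator_of_mem hxA]
        linarith
    have hsup := nus_supermod ν hconv (lev f t) (A ∩ lev f (t - c))
    have hint_eq : lev f t ∩ (A ∩ lev f (t - c)) = A ∩ lev f t := by
      ext x
      constructor
      · rintro ⟨hx1, hx2, _⟩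
        exact ⟨hx2, hx1⟩
      · rintro ⟨hxA, hx⟩
        have hx' : t ≤ f x := hx
        exact ⟨hx, hxA, show t - c ≤ f x by linarith⟩
    rw [hint_eq] at hsup
    have e1 := nus_mono ν hsub
    rw [glev, glev, hH]
    simp only
    linarith
  have hWint : Integrable (W ν f) := W_integrable ν ⟨M, hM0, hfM⟩
  have e0 : Integrable (fun t => W ν f t + (H (t - c) - H t)) := hWint.add hshint
  have := integral_mono e0 (W_integrable ν hfc) hpt
  have e1 : (∫ t, (W ν f t + (H (t - c) - H t)))
      = (∫ t, W ν f t) + ∫ t, (H (t - c) - H t) := integral_add hWint hshint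
  rw [e1, hshval] at this
  rw [chq, chq]
  linarith

lemma chq_top (ν : Capacity X) {f : X → ℝ} (hf : Bdd f) {A : Set X} {c S : ℝ} (hc : 0 ≤ c)
    (hfS : ∀ x, f x ≤ S) (hA : ∀ x ∈ A, f x = S) :
    chq ν (fun x => f x + c * A.indicator (fun _ => (1:ℝ)) x) = chq ν f + c * nus ν A := by
  have hW : W ν (fun x => f x + c * A.indicator (fun _ => (1:ℝ)) x)
      = fun t => W ν f t + Set.indicator (Set.Ioc S (S + c)) (fun _ => nus ν A) t := by
    funext t
    rcases le_or_gt t S with h1 | h1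
    · have hlev : lev (fun x => f x + c * A.indicator (fun _ => (1:ℝ)) x) t = lev f t := by
        ext x
        simp only [lev, Set.mem_setOf_eq]
        constructor
        · intro hx
          by_cases hxA : x ∈ A
          · rw [hA x hxA]; exact h1
          · rwa [Set.indicator_of_notMem hxA, mul_zero, add_zero] at hx
        · intro hx
          have hnn : 0 ≤ c * A.indicator (fun _ => (1:ℝ)) x :=
            mul_nonneg hc (Set.indicator_nonneg (fun _ _ => zero_le_one) x)
          linarith
      rw [W, W, glev, glev, hlev,
        Set.indicator_of_notMem (fun hm => absurd (Set.mem_Ioc.1 hm).1 (not_lt.2 h1))]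
      ring
    · rcases le_or_gt t (S + c) with h2 | h2
      · have hlev : lev (fun x => f x + c * A.indicator (fun _ => (1:ℝ)) x) t = A := by
          ext x
          simp only [lev, Set.mem_setOf_eq]
          constructor
          · intro hx
            by_contra hxA
            rw [Set.indicator_of_notMem hxA, mul_zero, add_zero] at hx
            have := hfS x
            linarith
          · intro hx
            rw [Set.indicator_of_mem hx, mul_one, hA x hx]
            exact h2
        have hlevf : lev f t = ∅ := by
          refine Set.eq_empty_of_forall_notMem fun x hx => ?_
          have hx' : t ≤ f x := hx
          have := hfS x
          linarith
        rw [W, W, glev, glev, hlev, hlevf, nus_empty,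
          Set.indicator_of_mem (Set.mem_Ioc.2 ⟨h1, h2⟩)]
        ring
      · have hlev : lev (fun x => f x + c * A.indicator (fun _ => (1:ℝ)) x) t = ∅ := by
          refine Set.eq_empty_of_forall_notMem fun x hx => ?_
          have hx' : t ≤ f x + c * A.indicator (fun _ => (1:ℝ)) x := hx
          by_cases hxA : x ∈ A
          · rw [Set.indicator_of_mem hxA, mul_one, hA x hxA] at hx'
            linarith
          · rw [Set.indicator_of_notMem hxA, mul_zero, add_zero] at hx'
            have := hfS x
            linarith
        have hlevf : lev f t = ∅ := by
          refine Set.eq_empty_of_forall_notMem fun x hx => ?_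
          have hx' : t ≤ f x := hx
          have := hfS x
          linarith
        rw [W, W, glev, glev, hlev, hlevf, nus_empty,
          Set.indicator_of_notMem (fun hm => absurd (Set.mem_Ioc.1 hm).2 (not_le.2 h2))]
        ring
  have hindint : Integrable (Set.indicator (Set.Ioc S (S + c)) (fun _ => nus ν A)) := by
    refine IntegrableOn.integrable_indicator ?_ measurableSet_Ioc
    exact integrableOn_const measure_Ioc_lt_top.ne
  have e1 : (∫ t, (W ν f t + Set.indicator (Set.Ioc S (S + c)) (fun _ => nus ν A) t))
      = (∫ t, W ν f t) + ∫ t, Set.indicator (Set.Ioc S (S + c)) (fun _ => nus ν A) t :=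
    integral_add (W_integrable ν hf) hindint
  rw [chq, hW, e1, integral_indicator measurableSet_Ioc, setIntegral_const, Real.volume_real_Ioc_of_le (by linarith : S ≤ S + c),
    smul_eq_mul, show S + c - S = c by ring, chq]

lemma bdd_tower (c : ℕ → ℝ) (A : ℕ → Set X) (n : ℕ) :
    Bdd (fun x => ∑ i ∈ Finset.range n, c i * (A i).indicator (fun _ => (1:ℝ)) x) := by
  induction n with
  | zero => simpa using Bdd.const (0:ℝ)
  | succ n ih =>
    have : (fun x => ∑ i ∈ Finset.range (n+1), c i * (A i).indicator (fun _ => (1:ℝ)) x)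
        = fun x => (∑ i ∈ Finset.range n, c i * (A i).indicator (fun _ => (1:ℝ)) x)
          + c n * (A n).indicator (fun _ => (1:ℝ)) x := by
      funext x
      rw [Finset.sum_range_succ]
    rw [this]
    exact ih.add (Bdd.smul (c n) (Bdd.indicator (A n)))

lemma chq_sum_le (ν : Capacity X) (hconv : ν.IsConvexCap) {f : X → ℝ} (hf : Bdd f)
    (c : ℕ → ℝ) (hc : ∀ i, 0 ≤ c i) (A : ℕ → Set X) (n : ℕ) :
    chq ν f + ∑ i ∈ Finset.range n, c i * nus ν (A i)
      ≤ chq ν (fun x => f x + ∑ i ∈ Finset.range n, c i * (A i).indicator (fun _ => (1:ℝ)) x) := by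
  induction n with
  | zero => simp
  | succ n ih =>
    have hf' : Bdd (fun x => f x + ∑ i ∈ Finset.range n, c i * (A i).indicator (fun _ => (1:ℝ)) x) :=
      hf.add (bdd_tower c A n)
    have hstep := chq_key ν hconv hf' (A n) (hc n)
    have he : (fun x => (f x + ∑ i ∈ Finset.range n, c i * (A i).indicator (fun _ => (1:ℝ)) x)
          + c n * (A n).indicator (fun _ => (1:ℝ)) x)
        = fun x => f x + ∑ i ∈ Finset.range (n+1), c i * (A i).indicator (fun _ => (1:ℝ)) x := by
      funext x
      rw [Finset.sum_range_succ]
      ring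
    rw [he] at hstep
    rw [Finset.sum_range_succ]
    linarith

lemma chq_tower_eq (ν : Capacity X) (c : ℕ → ℝ) (hc : ∀ i, 0 ≤ c i) (F : ℕ → Set X)
    (hmono : ∀ i j, i ≤ j → F j ⊆ F i) (n : ℕ) :
    chq ν (fun x => ∑ i ∈ Finset.range n, c i * (F i).indicator (fun _ => (1:ℝ)) x)
      = ∑ i ∈ Finset.range n, c i * nus ν (F i) := by
  induction n with
  | zero => simpa using chq_zero ν
  | succ n ih =>
    have hfS : ∀ x, (∑ i ∈ Finset.range n, c i * (F i).indicator (fun _ => (1:ℝ)) x)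
        ≤ ∑ i ∈ Finset.range n, c i := by
      intro x
      refine Finset.sum_le_sum fun i _ => ?_
      have : (F i).indicator (fun _ => (1:ℝ)) x ≤ 1 := by
        classical
        rw [Set.indicator_apply]
        split_ifs <;> norm_num
      exact mul_le_of_le_one_right (hc i) this
    have hA : ∀ x ∈ F n, (∑ i ∈ Finset.range n, c i * (F i).indicator (fun _ => (1:ℝ)) x)
        = ∑ i ∈ Finset.range n, c i := by
      intro x hx
      refine Finset.sum_congr rfl fun i hi => ?_
      rw [Set.indicator_of_mem (hmono i n (Finset.mem_range.1 hi).le hx), mul_one]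
    have := chq_top ν (bdd_tower c F n) (hc n) hfS hA
    have he : (fun x => (∑ i ∈ Finset.range n, c i * (F i).indicator (fun _ => (1:ℝ)) x)
          + c n * (F n).indicator (fun _ => (1:ℝ)) x)
        = fun x => ∑ i ∈ Finset.range (n+1), c i * (F i).indicator (fun _ => (1:ℝ)) x := by
      funext x
      rw [Finset.sum_range_succ]
    rw [he] at this
    rw [this, ih, Finset.sum_range_succ]

/-! ### Superadditivity of `chq` -/

lemma chq_superadd_nonneg (ν : Capacity X) (hconv : ν.IsConvexCap) {f g : X → ℝ}
    (hf : Bdd f) {Mg : ℝ} (hg0 : ∀ x, 0 ≤ g x) (hgM : ∀ x, g x ≤ Mg) (hMg0 : 0 ≤ Mg) :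
    chq ν f + chq ν g ≤ chq ν (fun x => f x + g x) := by
  refine le_of_forall_pos_le_add fun ε hε => ?_
  classical
  set k := ⌈Mg / ε⌉₊ with hk
  set A : ℕ → Set X := fun i => lev g (((i : ℝ) + 1) * ε) with hA
  have hmem_iff : ∀ (i : ℕ) (x : X), x ∈ A i ↔ i < ⌊g x / ε⌋₊ := by
    intro i x
    rw [hA]
    simp only [lev, Set.mem_setOf_eq]
    rw [← le_div_iff₀ hε, show ((i:ℝ) + 1) = ((i + 1 : ℕ) : ℝ) by push_cast; ring,
      ← Nat.le_floor_iff (div_nonneg (hg0 x) hε.le)]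
    omega
  have hsum : ∀ x, (∑ i ∈ Finset.range k, ε * (A i).indicator (fun _ => (1:ℝ)) x)
      = ε * ((min k ⌊g x / ε⌋₊ : ℕ) : ℝ) := by
    intro x
    have hterm : ∀ i ∈ Finset.range k, ε * (A i).indicator (fun _ => (1:ℝ)) x
        = if i < ⌊g x / ε⌋₊ then ε else 0 := by
      intro i _
      by_cases hi : i < ⌊g x / ε⌋₊
      · rw [if_pos hi, Set.indicator_of_mem ((hmem_iff i x).2 hi), mul_one]
      · rw [if_neg hi, Set.indicator_of_notMem (fun hm => hi ((hmem_iff i x).1 hm)), mul_zero]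
    rw [Finset.sum_congr rfl hterm, Finset.sum_ite, Finset.sum_const, Finset.sum_const_zero,
      add_zero]
    have hfilt : (Finset.range k).filter (fun i => i < ⌊g x / ε⌋₊)
        = Finset.range (min k ⌊g x / ε⌋₊) := by
      ext i
      simp only [Finset.mem_filter, Finset.mem_range, lt_min_iff]
    rw [hfilt, Finset.card_range, nsmul_eq_mul, mul_comm]
  have hle : ∀ x, (∑ i ∈ Finset.range k, ε * (A i).indicator (fun _ => (1:ℝ)) x) ≤ g x := by
    intro x
    rw [hsum x]
    have h1 : ((min k ⌊g x / ε⌋₊ : ℕ) : ℝ) ≤ (⌊g x / ε⌋₊ : ℝ) :=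
      Nat.cast_le.2 (min_le_right _ _)
    have h2 : (⌊g x / ε⌋₊ : ℝ) ≤ g x / ε := Nat.floor_le (div_nonneg (hg0 x) hε.le)
    calc ε * ((min k ⌊g x / ε⌋₊ : ℕ) : ℝ) ≤ ε * (g x / ε) :=
          mul_le_mul_of_nonneg_left (h1.trans h2) hε.le
      _ = g x := by field_simp
  have hge : ∀ x, g x ≤ (∑ i ∈ Finset.range k, ε * (A i).indicator (fun _ => (1:ℝ)) x) + ε := by
    intro x
    rw [hsum x]
    have hmk : ⌊g x / ε⌋₊ ≤ k := by
      refine le_trans (Nat.floor_mono ?_) (Nat.floor_le_ceil _)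
      gcongr
      exact hgM x
    rw [min_eq_right hmk]
    have h3 : g x / ε < (⌊g x / ε⌋₊ : ℝ) + 1 := Nat.lt_floor_add_one _
    have h4 : g x < ((⌊g x / ε⌋₊ : ℝ) + 1) * ε := by
      rw [← div_lt_iff₀ hε]
      exact h3
    nlinarith
  have hAmono : ∀ i j, i ≤ j → A j ⊆ A i := by
    intro i j hij
    apply lev_mono g
    have hcast : ((i:ℝ) + 1) ≤ ((j:ℝ) + 1) := by
      have : (i:ℝ) ≤ (j:ℝ) := Nat.cast_le.2 hij
      linarith
    exact mul_le_mul_of_nonneg_right hcast hε.le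
  have hgEbdd : Bdd (fun x => ∑ i ∈ Finset.range k, ε * (A i).indicator (fun _ => (1:ℝ)) x) :=
    bdd_tower (fun _ => ε) A k
  have hgbdd : Bdd g := ⟨Mg, hMg0, fun x => abs_le.2 ⟨by linarith [hg0 x], hgM x⟩⟩
  have t1 : chq ν g
      ≤ chq ν (fun x => ∑ i ∈ Finset.range k, ε * (A i).indicator (fun _ => (1:ℝ)) x) + ε := by
    have h := chq_mono ν hgbdd (hgEbdd.add (Bdd.const ε)) hge
    rwa [chq_add_const ν hgEbdd ε] at h
  have t2 : chq ν (fun x => ∑ i ∈ Finset.range k, ε * (A i).indicator (fun _ => (1:ℝ)) x)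
      = ∑ i ∈ Finset.range k, ε * nus ν (A i) :=
    chq_tower_eq ν (fun _ => ε) (fun _ => hε.le) A hAmono k
  have t3 := chq_sum_le ν hconv hf (fun _ => ε) (fun _ => hε.le) A k
  have t4 : chq ν (fun x => f x + ∑ i ∈ Finset.range k, ε * (A i).indicator (fun _ => (1:ℝ)) x)
      ≤ chq ν (fun x => f x + g x) := by
    refine chq_mono ν (hf.add hgEbdd) (hf.add hgbdd) fun x => ?_
    have := hle x
    linarith
  linarith

lemma chq_superadd (ν : Capacity X) (hconv : ν.IsConvexCap) {f g : X → ℝ}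
    (hf : Bdd f) (hg : Bdd g) : chq ν f + chq ν g ≤ chq ν (fun x => f x + g x) := by
  obtain ⟨Mg, hMg0, hgM⟩ := hg
  have hg' : ∀ x, 0 ≤ g x + Mg := fun x => by have := (abs_le.1 (hgM x)).1; linarith
  have hg'' : ∀ x, g x + Mg ≤ 2 * Mg := fun x => by have := (abs_le.1 (hgM x)).2; linarith
  have h := chq_superadd_nonneg ν hconv (g := fun x => g x + Mg) hf hg' hg'' (by linarith)
  rw [chq_add_const ν ⟨Mg, hMg0, hgM⟩ Mg] at h
  have he : (fun x => f x + (g x + Mg)) = fun x => (f x + g x) + Mg := by funext x; ring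
  rw [he, chq_add_const ν (hf.add ⟨Mg, hMg0, hgM⟩) Mg] at h
  linarith


/-! ### The space of bounded functions and the functionals q, P -/

def bddE (X : Type*) [TopologicalSpace X] : Submodule ℝ (X → ℝ) where
  carrier := {f | Bdd f}
  add_mem' := fun hf hg => hf.add hg
  zero_mem' := ⟨0, le_rfl, fun x => by simp⟩
  smul_mem' := fun c f hf => hf.smul c

noncomputable def qE (ν : Capacity X) (e : bddE X) : ℝ := chq ν (e : X → ℝ)

noncomputable def PE (ν : Capacity X) (e : bddE X) : ℝ := -(qE ν (-e))

lemma qE_superadd (ν : Capacity X) (hconv : ν.IsConvexCap) (e1 e2 : bddE X) :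
    qE ν e1 + qE ν e2 ≤ qE ν (e1 + e2) := by
  have h := chq_superadd ν hconv (f := (e1 : X → ℝ)) (g := (e2 : X → ℝ)) e1.2 e2.2
  have he : ((e1 + e2 : bddE X) : X → ℝ) = fun x => (e1 : X → ℝ) x + (e2 : X → ℝ) x := rfl
  rw [qE, qE, qE, he]
  exact h

lemma qE_zero (ν : Capacity X) : qE ν (0 : bddE X) = 0 := by
  have he : ((0 : bddE X) : X → ℝ) = fun _ : X => (0:ℝ) := rfl
  rw [qE, he, chq_zero]

lemma qE_smul (ν : Capacity X) (e : bddE X) {c : ℝ} (hc : 0 < c) :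
    qE ν (c • e) = c * qE ν e := by
  have he : ((c • e : bddE X) : X → ℝ) = fun x => c * (e : X → ℝ) x := rfl
  rw [qE, he, chq_smul ν _ hc, qE]

lemma PE_neg (ν : Capacity X) (e : bddE X) : PE ν (-e) = -(qE ν e) := by
  rw [PE, neg_neg]

lemma PE_zero (ν : Capacity X) : PE ν (0 : bddE X) = 0 := by
  rw [PE, neg_zero, qE_zero, neg_zero]

lemma qE_le_PE (ν : Capacity X) (hconv : ν.IsConvexCap) (e : bddE X) :
    qE ν e ≤ PE ν e := by
  have h := qE_superadd ν hconv e (-e)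
  rw [add_neg_cancel, qE_zero] at h
  rw [PE]
  linarith

lemma PE_subadd (ν : Capacity X) (hconv : ν.IsConvexCap) (e1 e2 : bddE X) :
    PE ν (e1 + e2) ≤ PE ν e1 + PE ν e2 := by
  have h := qE_superadd ν hconv (-e1) (-e2)
  rw [show (-e1) + (-e2) = -(e1 + e2) by abel] at h
  rw [PE, PE, PE]
  linarith

lemma PE_smul (ν : Capacity X) (e : bddE X) {c : ℝ} (hc : 0 < c) :
    PE ν (c • e) = c * PE ν e := by
  rw [PE, show -(c • e) = c • (-e) by rw [smul_neg], qE_smul ν _ hc, PE]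
  ring

lemma PE_sub_ge (ν : Capacity X) (hconv : ν.IsConvexCap) (g h : bddE X) :
    qE ν g - qE ν h ≤ PE ν (g - h) := by
  have h1 := qE_superadd ν hconv (h - g) g
  rw [sub_add_cancel] at h1
  rw [show PE ν (g - h) = -(qE ν (h - g)) by rw [PE, neg_sub]]
  linarith

noncomputable def indE (A : Set X) : bddE X := ⟨A.indicator fun _ => (1:ℝ), Bdd.indicator A⟩

lemma qE_indE (ν : Capacity X) (A : Set X) : qE ν (indE A) = nus ν A :=
  chq_indicator ν A

def oneE : bddE X := ⟨fun _ => (1:ℝ), Bdd.const 1⟩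

lemma qE_oneE (ν : Capacity X) : qE ν (oneE : bddE X) = 1 := chq_const ν 1

lemma PE_oneE (ν : Capacity X) : PE ν (oneE : bddE X) = 1 := by
  rw [PE]
  have he : ((-oneE : bddE X) : X → ℝ) = fun _ : X => (-1 : ℝ) := rfl
  rw [qE, he, chq_const]
  norm_num

lemma qE_nonneg_of_nonneg (ν : Capacity X) (e : bddE X) (h : ∀ x, 0 ≤ (e : X → ℝ) x) :
    0 ≤ qE ν e := chq_nonneg ν h

end CCP

open CCP

/-- Every convex (supermodular) capacity on a compact Hausdorff space is exact. -/
theorem convex_capacity_isExact (X : Type*) [TopologicalSpace X]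
    [CompactSpace X] [T2Space X] [MeasurableSpace X] [BorelSpace X]
    (nu : Capacity X) (hconv : nu.IsConvexCap) :
    nu.IsExact := by
  classical
  intro B hB
  -- Step 1: a decreasing sequence of closed neighbourhoods of B with capacity converging to ν(B)
  have hex : ∀ n : ℕ, ∃ F : Set X, IsClosed F ∧ B ⊆ interior F ∧
      nu.toFun F < nu.toFun B + 1/(n+1) := by
    intro n
    have hlt : nu.toFun B < nu.toFun B + 1/(n+1) := by
      have : (0:ℝ) < 1/(n+1) := by positivity
      linarith
    obtain ⟨O, hO, hBO, hprop⟩ := nu.usc' B _ hB hlt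
    obtain ⟨V, hV, hBV, hclV⟩ := normal_exists_closure_subset hB hO hBO
    refine ⟨closure V, isClosed_closure, hBV.trans (interior_maximal subset_closure hV), ?_⟩
    exact hprop (closure V) isClosed_closure.isCompact hclV
  choose F0 hF0c hF0i hF0v using hex
  set Fn : ℕ → Set X := fun n => ⋂ m ∈ Finset.range (n+1), F0 m with hFn
  have hFnc : ∀ n, IsClosed (Fn n) := fun n => isClosed_biInter fun m _ => hF0c m
  have hFni : ∀ n, B ⊆ interior (Fn n) := by
    intro n
    have hopen : IsOpen (⋂ m ∈ Finset.range (n+1), interior (F0 m)) :=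
      isOpen_biInter_finset fun m _ => isOpen_interior
    refine (Set.subset_iInter₂ fun m _ => hF0i m).trans (interior_maximal ?_ hopen)
    exact Set.iInter₂_mono fun m _ => interior_subset
  have hFnmono : ∀ i j, i ≤ j → Fn j ⊆ Fn i := by
    intro i j hij x hx
    rw [hFn, Set.mem_iInter₂] at hx ⊢
    intro m hm
    exact hx m (Finset.mem_range.2 (lt_of_lt_of_le (Finset.mem_range.1 hm) (by omega)))
  have hFnval : ∀ n, nu.toFun (Fn n) < nu.toFun B + 1/(n+1) := by
    intro n
    refine lt_of_le_of_lt (nu.mono' _ _ (hFnc n) (hF0c n) ?_) (hF0v n)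
    exact Set.biInter_subset_of_mem (Finset.self_mem_range_succ n)
  have hBFn : ∀ n, B ⊆ Fn n := fun n => (hFni n).trans interior_subset
  -- Step 2: the sublinear functional N
  set gs : ℕ → bddE X := fun n => indE (Fn n) with hgs
  have hqgs : ∀ n, qE nu (gs n) = nu.toFun (Fn n) := by
    intro n
    rw [hgs]
    simp only
    rw [qE_indE, nus_closed nu (hFnc n)]
  have htow : ∀ (n : ℕ) (c : ℕ → ℝ), (∀ i, 0 ≤ c i) →
      qE nu (∑ i ∈ Finset.range n, c i • gs i) = ∑ i ∈ Finset.range n, c i * qE nu (gs i) := by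
    intro n c hc
    have hcoe : ((∑ i ∈ Finset.range n, c i • gs i : bddE X) : X → ℝ)
        = fun x => ∑ i ∈ Finset.range n, c i * (Fn i).indicator (fun _ => (1:ℝ)) x := by
      funext x
      rw [show ((∑ i ∈ Finset.range n, c i • gs i : bddE X) : X → ℝ)
          = ∑ i ∈ Finset.range n, ((c i • gs i : bddE X) : X → ℝ) from
        map_sum (bddE X).subtype _ _]
      rw [Finset.sum_apply]
      refine Finset.sum_congr rfl fun i _ => ?_
      rfl
    rw [qE, hcoe, chq_tower_eq nu c hc Fn hFnmono n]
    refine Finset.sum_congr rfl fun i _ => ?_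
    rw [hqgs i, nus_closed nu (hFnc i)]
  set rep : bddE X → Set ℝ := fun g => {r : ℝ | ∃ (n : ℕ) (c : ℕ → ℝ), (∀ i, 0 ≤ c i) ∧
      r = PE nu (g - ∑ i ∈ Finset.range n, c i • gs i)
        + ∑ i ∈ Finset.range n, c i * qE nu (gs i)} with hrep
  have hrep_ge : ∀ g, ∀ r ∈ rep g, qE nu g ≤ r := by
    rintro g r ⟨n, c, hc, rfl⟩
    have h1 := PE_sub_ge nu hconv g (∑ i ∈ Finset.range n, c i • gs i)
    rw [htow n c hc] at h1
    linarith
  have hrep_ne : ∀ g, (rep g).Nonempty := by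
    intro g
    refine ⟨PE nu g, 0, 0, fun i => le_rfl, ?_⟩
    simp
  have hbdd : ∀ g, BddBelow (rep g) := fun g => ⟨qE nu g, fun r hr => hrep_ge g r hr⟩
  set N : bddE X → ℝ := fun g => sInf (rep g) with hN
  have hNP : ∀ g, N g ≤ PE nu g := by
    intro g
    refine csInf_le (hbdd g) ⟨0, 0, fun i => le_rfl, ?_⟩
    simp
  have hqN : ∀ g, qE nu g ≤ N g := fun g => le_csInf (hrep_ne g) (hrep_ge g)
  -- padding helpers
  have hpad1 : ∀ (n M : ℕ), n ≤ M → ∀ c : ℕ → ℝ,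
      (∑ i ∈ Finset.range M, (if i < n then c i else 0) • gs i)
        = ∑ i ∈ Finset.range n, c i • gs i := by
    intro n M hnM c
    rw [← Finset.sum_subset (Finset.range_subset_range.2 hnM)
      (fun i _ hi => by rw [if_neg (fun h => hi (Finset.mem_range.2 h)), zero_smul])]
    exact Finset.sum_congr rfl fun i hi => by rw [if_pos (Finset.mem_range.1 hi)]
  have hpad2 : ∀ (n M : ℕ), n ≤ M → ∀ c : ℕ → ℝ,
      (∑ i ∈ Finset.range M, (if i < n then c i else 0) * qE nu (gs i))
        = ∑ i ∈ Finset.range n, c i * qE nu (gs i) := by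
    intro n M hnM c
    rw [← Finset.sum_subset (Finset.range_subset_range.2 hnM)
      (fun i _ hi => by rw [if_neg (fun h => hi (Finset.mem_range.2 h)), zero_mul])]
    exact Finset.sum_congr rfl fun i hi => by rw [if_pos (Finset.mem_range.1 hi)]
  have hNadd : ∀ x y, N (x + y) ≤ N x + N y := by
    intro x y
    have key : ∀ r₁ ∈ rep x, ∀ r₂ ∈ rep y, N (x + y) ≤ r₁ + r₂ := by
      rintro r₁ ⟨n₁, c₁, hc₁, rfl⟩ r₂ ⟨n₂, c₂, hc₂, rfl⟩
      set M := max n₁ n₂ with hM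
      set c : ℕ → ℝ := fun i => (if i < n₁ then c₁ i else 0) + (if i < n₂ then c₂ i else 0)
        with hc
      have hcnn : ∀ i, 0 ≤ c i := by
        intro i
        rw [hc]
        have : 0 ≤ (if i < n₁ then c₁ i else 0) := by split_ifs with h; exacts [hc₁ i, le_rfl]
        have : 0 ≤ (if i < n₂ then c₂ i else 0) := by split_ifs with h; exacts [hc₂ i, le_rfl]
        simp only
        positivity
      have hs : (∑ i ∈ Finset.range M, c i • gs i)
          = (∑ i ∈ Finset.range n₁, c₁ i • gs i) + ∑ i ∈ Finset.range n₂, c₂ i • gs i := by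
        rw [hc]
        simp only [add_smul]
        rw [Finset.sum_add_distrib, hpad1 n₁ M (le_max_left _ _) c₁,
          hpad1 n₂ M (le_max_right _ _) c₂]
      have hq : (∑ i ∈ Finset.range M, c i * qE nu (gs i))
          = (∑ i ∈ Finset.range n₁, c₁ i * qE nu (gs i))
            + ∑ i ∈ Finset.range n₂, c₂ i * qE nu (gs i) := by
        rw [hc]
        simp only [add_mul]
        rw [Finset.sum_add_distrib, hpad2 n₁ M (le_max_left _ _) c₁,
          hpad2 n₂ M (le_max_right _ _) c₂]
      have hmem : PE nu ((x + y) - ∑ i ∈ Finset.range M, c i • gs i)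
          + ∑ i ∈ Finset.range M, c i * qE nu (gs i) ∈ rep (x + y) := ⟨M, c, hcnn, rfl⟩
      have hPle : PE nu ((x + y) - ∑ i ∈ Finset.range M, c i • gs i)
          ≤ PE nu (x - ∑ i ∈ Finset.range n₁, c₁ i • gs i)
            + PE nu (y - ∑ i ∈ Finset.range n₂, c₂ i • gs i) := by
        rw [show (x + y) - ∑ i ∈ Finset.range M, c i • gs i
            = (x - ∑ i ∈ Finset.range n₁, c₁ i • gs i)
              + (y - ∑ i ∈ Finset.range n₂, c₂ i • gs i) by rw [hs]; abel]
        exact PE_subadd nu hconv _ _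
      have := csInf_le (hbdd (x + y)) hmem
      rw [hN]
      simp only
      rw [hq] at this
      linarith
    have h1 : ∀ r₁ ∈ rep x, N (x + y) - r₁ ≤ N y := by
      intro r₁ h₁
      refine le_csInf (hrep_ne y) fun r₂ h₂ => ?_
      linarith [key r₁ h₁ r₂ h₂]
    have h2 : N (x + y) - N y ≤ N x := by
      refine le_csInf (hrep_ne x) fun r₁ h₁ => ?_
      linarith [h1 r₁ h₁]
    linarith
  have hNsmul_le : ∀ a : ℝ, 0 < a → ∀ x, N (a • x) ≤ a * N x := by
    intro a ha x
    have key : ∀ r ∈ rep x, N (a • x) ≤ a * r := by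
      rintro r ⟨n, c, hc, rfl⟩
      have hmem : PE nu ((a • x) - ∑ i ∈ Finset.range n, (fun i => a * c i) i • gs i)
          + ∑ i ∈ Finset.range n, (fun i => a * c i) i * qE nu (gs i) ∈ rep (a • x) :=
        ⟨n, fun i => a * c i, fun i => mul_nonneg ha.le (hc i), rfl⟩
      have he : (a • x) - ∑ i ∈ Finset.range n, (fun i => a * c i) i • gs i
          = a • (x - ∑ i ∈ Finset.range n, c i • gs i) := by
        rw [smul_sub, Finset.smul_sum]
        simp only [smul_smul]
      have hval : PE nu ((a • x) - ∑ i ∈ Finset.range n, (fun i => a * c i) i • gs i)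
          + ∑ i ∈ Finset.range n, (fun i => a * c i) i * qE nu (gs i)
          = a * (PE nu (x - ∑ i ∈ Finset.range n, c i • gs i)
            + ∑ i ∈ Finset.range n, c i * qE nu (gs i)) := by
        rw [he, PE_smul nu _ ha, mul_add, Finset.mul_sum]
        simp only [mul_assoc]
      have := csInf_le (hbdd (a • x)) hmem
      rw [hval] at this
      exact this
    have h1 : N (a • x) / a ≤ N x := by
      refine le_csInf (hrep_ne x) fun r hr => ?_
      rw [div_le_iff₀ ha]
      linarith [key r hr, mul_comm r a]
    calc N (a • x) = a * (N (a • x) / a) := by field_simp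
      _ ≤ a * N x := mul_le_mul_of_nonneg_left h1 ha.le
  have hNsmul : ∀ a : ℝ, 0 < a → ∀ x, N (a • x) = a * N x := by
    intro a ha x
    refine le_antisymm (hNsmul_le a ha x) ?_
    have h2 := hNsmul_le a⁻¹ (inv_pos.2 ha) (a • x)
    rw [inv_smul_smul₀ ha.ne'] at h2
    calc a * N x ≤ a * (a⁻¹ * N (a • x)) := mul_le_mul_of_nonneg_left h2 ha.le
      _ = N (a • x) := by field_simp
  -- Step 3: Hahn–Banach
  obtain ⟨L, -, hL⟩ := exists_extension_of_le_sublinear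
      (⟨⊥, 0⟩ : (bddE X) →ₗ.[ℝ] ℝ) N hNsmul hNadd (by
    rintro ⟨x, hx⟩
    have hx0 : x = 0 := (Submodule.mem_bot ℝ).1 hx
    have h0 : (0:ℝ) ≤ N 0 := by
      have := hqN 0
      rw [qE_zero] at this
      exact this
    subst hx0
    simpa using h0)
  -- Step 4: properties of L
  have hLP : ∀ g, L g ≤ PE nu g := fun g => (hL g).trans (hNP g)
  have hqL : ∀ g, qE nu g ≤ L g := by
    intro g
    have h1 := hLP (-g)
    rw [map_neg, PE_neg] at h1
    linarith
  have hLmono : ∀ g₁ g₂ : bddE X, (∀ x, (g₁ : X → ℝ) x ≤ (g₂ : X → ℝ) x) → L g₁ ≤ L g₂ := by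
    intro g₁ g₂ h
    have h0 : 0 ≤ qE nu (g₂ - g₁) := by
      refine qE_nonneg_of_nonneg nu _ fun x => ?_
      have hcoe : ((g₂ - g₁ : bddE X) : X → ℝ) x = (g₂ : X → ℝ) x - (g₁ : X → ℝ) x := rfl
      rw [hcoe]
      linarith [h x]
    have h1 := hqL (g₂ - g₁)
    rw [map_sub] at h1
    linarith
  have hL1 : L (oneE : bddE X) = 1 := by
    have h1 := hLP oneE
    have h2 := hqL oneE
    rw [PE_oneE] at h1
    rw [qE_oneE] at h2
    linarith
  have hLgs : ∀ n, L (gs n) ≤ nu.toFun (Fn n) := by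
    intro n
    set c : ℕ → ℝ := fun i => if i = n then (1:ℝ) else 0 with hcdef
    have hcnn : ∀ i, 0 ≤ c i := by
      intro i
      by_cases h : i = n <;> simp [hcdef, h]
    have hsum : (∑ i ∈ Finset.range (n+1), c i • gs i) = gs n := by
      rw [show (∑ i ∈ Finset.range (n+1), c i • gs i)
          = ∑ i ∈ Finset.range (n+1), (if i = n then gs i else 0) from
        Finset.sum_congr rfl fun i _ => by
          by_cases h : i = n <;> simp [hcdef, h]]
      rw [Finset.sum_ite_eq' (Finset.range (n+1)) n gs,
        if_pos (Finset.self_mem_range_succ n)]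
    have hsumq : (∑ i ∈ Finset.range (n+1), c i * qE nu (gs i)) = qE nu (gs n) := by
      rw [show (∑ i ∈ Finset.range (n+1), c i * qE nu (gs i))
          = ∑ i ∈ Finset.range (n+1), (if i = n then qE nu (gs i) else 0) from
        Finset.sum_congr rfl fun i _ => by
          by_cases h : i = n <;> simp [hcdef, h]]
      rw [Finset.sum_ite_eq' (Finset.range (n+1)) n (fun i => qE nu (gs i)),
        if_pos (Finset.self_mem_range_succ n)]
    have hmem : PE nu (gs n - ∑ i ∈ Finset.range (n+1), c i • gs i)
        + ∑ i ∈ Finset.range (n+1), c i * qE nu (gs i) ∈ rep (gs n) := ⟨n+1, c, hcnn, rfl⟩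
    have hval : PE nu (gs n - ∑ i ∈ Finset.range (n+1), c i • gs i)
        + ∑ i ∈ Finset.range (n+1), c i * qE nu (gs i) = nu.toFun (Fn n) := by
      rw [hsum, hsumq, sub_self, PE_zero, zero_add, hqgs n]
    have h1 := csInf_le (hbdd (gs n)) hmem
    rw [hval] at h1
    exact (hL (gs n)).trans h1
  have hLind_nonneg : ∀ A : Set X, 0 ≤ L (indE A) := by
    intro A
    refine le_trans ?_ (hqL (indE A))
    rw [qE_indE]
    exact nus_nonneg nu A
  -- Step 5: the content and its measure
  set cont : MeasureTheory.Content X :=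
    { toFun := fun K => Real.toNNReal (L (indE (K : Set X)))
      mono' := fun K₁ K₂ h => Real.toNNReal_mono (hLmono _ _ fun x =>
        Set.indicator_le_indicator_of_subset h (fun _ => zero_le_one) x)
      sup_disjoint' := by
        intro K₁ K₂ hdisj _ _
        have he : indE ((K₁ ⊔ K₂ : Compacts X) : Set X) = indE (K₁ : Set X) + indE (K₂ : Set X) := by
          apply Subtype.ext
          show ((K₁ ⊔ K₂ : Compacts X) : Set X).indicator (fun _ => (1:ℝ))
            = (K₁ : Set X).indicator (fun _ => (1:ℝ)) + (K₂ : Set X).indicator (fun _ => (1:ℝ))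
          rw [Compacts.coe_sup, Set.indicator_union_of_disjoint hdisj]
          rfl
        show Real.toNNReal (L (indE ((K₁ ⊔ K₂ : Compacts X) : Set X)))
          = Real.toNNReal (L (indE (K₁ : Set X))) + Real.toNNReal (L (indE (K₂ : Set X)))
        rw [he, map_add, Real.toNNReal_add (hLind_nonneg _) (hLind_nonneg _)]
      sup_le' := by
        intro K₁ K₂
        have hpt : ∀ x, ((indE ((K₁ ⊔ K₂ : Compacts X) : Set X)) : X → ℝ) x
            ≤ ((indE (K₁ : Set X) + indE (K₂ : Set X) : bddE X) : X → ℝ) x := by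
          intro x
          show ((K₁ ⊔ K₂ : Compacts X) : Set X).indicator (fun _ => (1:ℝ)) x
            ≤ (K₁ : Set X).indicator (fun _ => (1:ℝ)) x + (K₂ : Set X).indicator (fun _ => (1:ℝ)) x
          rw [Compacts.coe_sup]
          by_cases h1 : x ∈ (K₁ : Set X)
          · rw [Set.indicator_of_mem h1]
            have h2 : (K₁ ∪ K₂ : Set X).indicator (fun _ => (1:ℝ)) x ≤ 1 := by
              rw [Set.indicator_apply]
              split_ifs <;> norm_num
            have h3 : 0 ≤ (K₂ : Set X).indicator (fun _ => (1:ℝ)) x :=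
              Set.indicator_nonneg (fun _ _ => zero_le_one) x
            linarith
          · by_cases h2 : x ∈ (K₂ : Set X)
            · rw [Set.indicator_of_mem h2]
              have h3 : (K₁ ∪ K₂ : Set X).indicator (fun _ => (1:ℝ)) x ≤ 1 := by
                rw [Set.indicator_apply]
                split_ifs <;> norm_num
              have h4 : 0 ≤ (K₁ : Set X).indicator (fun _ => (1:ℝ)) x :=
                Set.indicator_nonneg (fun _ _ => zero_le_one) x
              linarith
            · rw [Set.indicator_of_notMem h1, Set.indicator_of_notMem h2,
                Set.indicator_of_notMem (fun hm => hm.elim h1 h2)]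
              norm_num
        have hm := hLmono _ _ hpt
        rw [map_add] at hm
        show Real.toNNReal (L (indE ((K₁ ⊔ K₂ : Compacts X) : Set X)))
          ≤ Real.toNNReal (L (indE (K₁ : Set X))) + Real.toNNReal (L (indE (K₂ : Set X)))
        calc Real.toNNReal (L (indE ((K₁ ⊔ K₂ : Compacts X) : Set X)))
            ≤ Real.toNNReal (L (indE (K₁ : Set X)) + L (indE (K₂ : Set X))) :=
              Real.toNNReal_mono hm
          _ ≤ _ := Real.toNNReal_add_le } with hcont
  set μ0 : Measure X := cont.measure with hμ0
  have hμ0apply : ∀ {s : Set X}, MeasurableSet s → μ0 s = cont.outerMeasure s :=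
    fun hs => MeasureTheory.Content.measure_apply cont hs
  have hcont_univ : cont (⟨Set.univ, isCompact_univ⟩ : Compacts X) = (1 : ℝ≥0∞) := by
    have he : indE (Set.univ : Set X) = (oneE : bddE X) := by
      apply Subtype.ext
      show (Set.univ : Set X).indicator (fun _ => (1:ℝ)) = fun _ => (1:ℝ)
      rw [Set.indicator_univ]
    show ((Real.toNNReal (L (indE ((⟨Set.univ, isCompact_univ⟩ : Compacts X) : Set X)))) : ℝ≥0∞) = 1
    have : ((⟨Set.univ, isCompact_univ⟩ : Compacts X) : Set X) = Set.univ := rfl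
    rw [this, he, hL1]
    norm_num
  have huniv : μ0 Set.univ = 1 := by
    rw [hμ0apply MeasurableSet.univ,
      cont.outerMeasure_of_isOpen Set.univ isOpen_univ]
    refine le_antisymm ?_ ?_
    · exact le_trans (cont.innerContent_le ⟨Set.univ, isOpen_univ⟩
        ⟨Set.univ, isCompact_univ⟩ subset_rfl) (le_of_eq hcont_univ)
    · exact le_trans (le_of_eq hcont_univ.symm)
        (cont.le_innerContent ⟨Set.univ, isCompact_univ⟩ ⟨Set.univ, isOpen_univ⟩ subset_rfl)
  have hcore0 : ∀ A : Set X, IsClosed A → ENNReal.ofReal (nu.toFun A) ≤ μ0 A := by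
    intro A hA
    have hAc : IsCompact A := hA.isCompact
    have h2 : nu.toFun A ≤ L (indE A) := by
      have h3 := hqL (indE A)
      rw [qE_indE, nus_closed nu hA] at h3
      exact h3
    have h1 : ENNReal.ofReal (nu.toFun A) ≤ cont (⟨A, hAc⟩ : Compacts X) := by
      calc ENNReal.ofReal (nu.toFun A) ≤ ENNReal.ofReal (L (indE A)) :=
            ENNReal.ofReal_le_ofReal h2
        _ = cont (⟨A, hAc⟩ : Compacts X) := rfl
    refine h1.trans ?_
    rw [hμ0apply hA.measurableSet]
    exact cont.le_outerMeasure_compacts ⟨A, hAc⟩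
  have hBle : ∀ n : ℕ, μ0 B ≤ ENNReal.ofReal (nu.toFun B + 1/(n+1)) := by
    intro n
    have h1 : μ0 B ≤ μ0 (interior (Fn n)) := measure_mono (hFni n)
    have h2 : μ0 (interior (Fn n))
        = cont.innerContent ⟨interior (Fn n), isOpen_interior⟩ := by
      rw [hμ0apply isOpen_interior.measurableSet,
        cont.outerMeasure_of_isOpen _ isOpen_interior]
    have h3 : cont.innerContent ⟨interior (Fn n), isOpen_interior⟩
        ≤ ENNReal.ofReal (nu.toFun B + 1/(n+1)) := by
      rw [MeasureTheory.Content.innerContent]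
      refine iSup₂_le fun K hK => ?_
      have hKFn : (K : Set X) ⊆ Fn n := Set.Subset.trans hK interior_subset
      have hmono := hLmono (indE (K : Set X)) (gs n) (fun x =>
        Set.indicator_le_indicator_of_subset hKFn (fun _ => zero_le_one) x)
      calc cont K = ENNReal.ofReal (L (indE (K : Set X))) := rfl
        _ ≤ ENNReal.ofReal (nu.toFun B + 1/(n+1)) :=
            ENNReal.ofReal_le_ofReal (le_trans hmono (le_trans (hLgs n) (hFnval n).le))
    exact h1.trans (h2.trans_le h3)
  haveI hprob : IsProbabilityMeasure μ0 := ⟨huniv⟩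
  set μP : ProbabilityMeasure X := ⟨μ0, hprob⟩ with hμP
  have hfin : ∀ s : Set X, μ0 s ≠ ⊤ := fun s => (measure_lt_top μ0 s).ne
  have hcoe : ∀ s : Set X, ((μP s : ℝ≥0) : ℝ) = (μ0 s).toReal := by
    intro s
    rw [show μ0 s = ((μP s : ℝ≥0) : ℝ≥0∞) from
      (ProbabilityMeasure.ennreal_coeFn_eq_coeFn_toMeasure μP s).symm, ENNReal.coe_toReal]
  have hcore : ∀ A : Set X, IsClosed A → nu.toFun A ≤ ((μP A : ℝ≥0) : ℝ) := by
    intro A hA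
    have h2 := ENNReal.toReal_mono (hfin A) (hcore0 A hA)
    rw [ENNReal.toReal_ofReal (nu_nonneg nu hA)] at h2
    rw [hcoe A]
    exact h2
  have hBub : ((μP B : ℝ≥0) : ℝ) ≤ nu.toFun B := by
    rw [hcoe B]
    refine le_of_forall_pos_le_add fun ε hε => ?_
    obtain ⟨n, hn⟩ := exists_nat_one_div_lt hε
    have h1 := ENNReal.toReal_mono (ENNReal.ofReal_ne_top) (hBle n)
    rw [ENNReal.toReal_ofReal (by
      have := nu_nonneg nu hB
      positivity)] at h1
    have h4 : (1:ℝ)/(n+1) < ε := hn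
    linarith
  have hreg : μP.toMeasure.Regular := by
    show (cont.measure).Regular
    infer_instance
  exact ⟨μP, ⟨hreg, hcore⟩, le_antisymm hBub (hcore B hB)⟩
end

section
/- Let X be a compact Hausdorff space and ν an exact capacity on X. Then ν is totally balanced: for every closed B ⊆ X, all closed A_1,…,A_n ⊆ B and nonnegative reals λ_1,…,λ_n with Σ λ_i χ_{A_i} ≤ 1_X, one has Σ λ_i ν(A_i) ≤ ν(B). -/
open Set MeasureTheory TopologicalSpace
open scoped NNReal

/-- Every exact capacity on a compact Hausdorff space is totally balanced. -/
theorem exact_capacity_isTotallyBalanced (X : Type*) [TopologicalSpace X]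
    [CompactSpace X] [T2Space X] [MeasurableSpace X] [BorelSpace X]
    (nu : Capacity X) (hex : nu.IsExact) :
    nu.IsTotallyBalanced := by
  intro B hB n lam A hlam hA hAB hsum
  obtain ⟨μ, ⟨hreg, hdom⟩, hμB⟩ := hex B hB
  set m := μ.toMeasure with hm
  have hcoe : ∀ s : Set X, ((μ s : ℝ≥0) : ℝ) = (m s).toReal := fun s => rfl
  have hint : ∀ i, MeasureTheory.Integrable ((A i).indicator (fun _ => (1:ℝ))) m :=
    fun i => (MeasureTheory.integrable_const 1).indicator (hA i).measurableSet
  have h1 : ∑ i, lam i * nu.toFun (A i) ≤ ∑ i, lam i * (m (A i)).toReal := by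
    apply Finset.sum_le_sum
    intro i _
    exact mul_le_mul_of_nonneg_left ((hcoe (A i)) ▸ hdom (A i) (hA i)) (hlam i)
  have h2 : ∑ i, lam i * (m (A i)).toReal
      = ∫ x, (∑ i, lam i * (A i).indicator (fun _ => (1:ℝ)) x) ∂m := by
    rw [MeasureTheory.integral_finset_sum]
    · congr 1; ext i
      rw [MeasureTheory.integral_const_mul, MeasureTheory.integral_indicator (hA i).measurableSet,
        MeasureTheory.setIntegral_const, smul_eq_mul, mul_one, MeasureTheory.measureReal_def]
    · intro i _
      exact (hint i).const_mul _
  have h3 : ∫ x, (∑ i, lam i * (A i).indicator (fun _ => (1:ℝ)) x) ∂m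
      ≤ ∫ x, B.indicator (fun _ => (1:ℝ)) x ∂m := by
    apply MeasureTheory.integral_mono
    · exact MeasureTheory.integrable_finset_sum _ (fun i _ => (hint i).const_mul _)
    · exact (MeasureTheory.integrable_const 1).indicator hB.measurableSet
    · intro x
      by_cases hx : x ∈ B
      · simpa [Set.indicator_of_mem hx] using hsum x
      · have hnx : ∀ i, x ∉ A i := fun i hxa => hx (hAB i hxa)
        simp [Set.indicator_of_notMem hx, Set.indicator_of_notMem (hnx _)]
  have h4 : ∫ x, B.indicator (fun _ => (1:ℝ)) x ∂m = (m B).toReal := by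
    simp [MeasureTheory.integral_indicator hB.measurableSet, MeasureTheory.measureReal_def]
  have h5 : (m B).toReal = nu.toFun B := by rw [← hcoe]; exact hμB
  linarith
end

section
/- Let f : X → Y be a continuous map between compact Hausdorff spaces and ν a totally balanced capacity on X. Then the pushforward capacity Mf(ν), defined on closed A ⊆ Y by Mf(ν)(A) = ν(f⁻¹(A)), is a totally balanced capacity on Y. -/
open Set MeasureTheory TopologicalSpace
open scoped NNReal

/-- The pushforward `Mf(ν)(A) = ν(f⁻¹(A))` of a totally balanced capacity
under a continuous map of compacta is totally balanced. -/
theorem pushforward_totallyBalanced {X Y : Type*} [TopologicalSpace X]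
    [CompactSpace X] [T2Space X] [TopologicalSpace Y] [CompactSpace Y] [T2Space Y]
    (f : X → Y) (hf : Continuous f) (nu : Capacity X) (hnu : nu.IsTotallyBalanced)
    (nu' : Capacity Y)
    (hpush : ∀ A : Set Y, IsClosed A → nu'.toFun A = nu.toFun (f ⁻¹' A)) :
    nu'.IsTotallyBalanced := by
  intro B hB n lam A hlam hA hAB hsum
  have key := hnu (f ⁻¹' B) (hB.preimage hf) n lam (fun i => f ⁻¹' A i)
    hlam (fun i => (hA i).preimage hf) (fun i => preimage_mono (hAB i)) ?_
  · calc ∑ i, lam i * nu'.toFun (A i) = ∑ i, lam i * nu.toFun (f ⁻¹' A i) := by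
          refine Finset.sum_congr rfl fun i _ => ?_
          rw [hpush _ (hA i)]
      _ ≤ nu.toFun (f ⁻¹' B) := key
      _ = nu'.toFun B := (hpush _ hB).symm
  · intro x
    have := hsum (f x)
    exact this
end

section
/- Let f : X → Y be a continuous map between compact Hausdorff spaces and ν an exact capacity on X. Then the pushforward Mf(ν), given by Mf(ν)(A) = ν(f⁻¹(A)) for closed A ⊆ Y, is an exact capacity on Y. -/
open Set MeasureTheory TopologicalSpace
open scoped NNReal

/-- The pushforward `Mf(ν)(A) = ν(f⁻¹(A))` of an exact capacity under a
continuous map of compacta is exact. -/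
theorem pushforward_exact {X Y : Type*} [TopologicalSpace X]
    [CompactSpace X] [T2Space X] [MeasurableSpace X] [BorelSpace X]
    [TopologicalSpace Y] [CompactSpace Y] [T2Space Y] [MeasurableSpace Y] [BorelSpace Y]
    (f : X → Y) (hf : Continuous f) (nu : Capacity X) (hnu : nu.IsExact)
    (nu' : Capacity Y)
    (hpush : ∀ A : Set Y, IsClosed A → nu'.toFun A = nu.toFun (f ⁻¹' A)) :
    nu'.IsExact := by
  intro B hB
  obtain ⟨μ, ⟨hreg, hdom⟩, hμB⟩ := hnu (f ⁻¹' B) (hB.preimage hf)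
  have hfae : AEMeasurable f μ.toMeasure := hf.measurable.aemeasurable
  refine ⟨μ.map hfae, ⟨?_, ?_⟩, ?_⟩
  · have : μ.toMeasure.InnerRegularCompactLTTop := inferInstance
    have h1 : (μ.toMeasure.map f).InnerRegular :=
      MeasureTheory.Measure.InnerRegular.map_of_continuous hf
    show (μ.toMeasure.map f).Regular
    infer_instance
  · intro A hA
    rw [ProbabilityMeasure.map_apply _ hfae hA.measurableSet, hpush A hA]
    exact hdom _ (hA.preimage hf)
  · rw [ProbabilityMeasure.map_apply _ hfae hB.measurableSet, hpush B hB]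
    exact hμB
end

section
/- Let X be a compact Hausdorff space. The map sX : cc(PX) → MEX, defined by sX(α)(A) = min{μ(A) : μ ∈ α} for closed A ⊆ X, is continuous, where cc(PX) carries the Vietoris topology and MEX the subspace topology from MX. -/
open Set MeasureTheory TopologicalSpace
open scoped NNReal

/-- The Vietoris topology on the hyperspace of subsets of a topological space. -/
def vietorisTopology (P : Type*) [TopologicalSpace P] : TopologicalSpace (Set P) :=
  TopologicalSpace.generateFrom
    ({S | ∃ U : Set P, IsOpen U ∧ S = {A : Set P | A ⊆ U}} ∪
     {S | ∃ U : Set P, IsOpen U ∧ S = {A : Set P | (A ∩ U).Nonempty}})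

/-- A set of probability measures is convex if it is stable under convex combinations. -/
def ConvexPMSet {X : Type*} [TopologicalSpace X] [MeasurableSpace X] [BorelSpace X]
    (α : Set (ProbabilityMeasure X)) : Prop :=
  ∀ μ₁ ∈ α, ∀ μ₂ ∈ α, ∀ t : ℝ≥0, t ≤ 1 →
    ∀ μ : ProbabilityMeasure X,
      μ.toFiniteMeasure = t • μ₁.toFiniteMeasure + (1 - t) • μ₂.toFiniteMeasure → μ ∈ α

/-- `cc(PX)`: the nonempty closed convex subsets of `PX`. -/
def ccPM (X : Type*) [TopologicalSpace X] [MeasurableSpace X] [BorelSpace X] : Type _ :=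
  {α : Set (ProbabilityMeasure X) // α.Nonempty ∧ IsClosed α ∧ ConvexPMSet α}

/-- `cc(PX)` carries the Vietoris topology. -/
noncomputable instance (X : Type*) [TopologicalSpace X] [MeasurableSpace X] [BorelSpace X] :
    TopologicalSpace (ccPM X) :=
  TopologicalSpace.induced (fun α : ccPM X => α.1) (vietorisTopology (ProbabilityMeasure X))

section Aux

set_option linter.unusedSectionVars false

open scoped ENNReal

variable {X : Type*} [TopologicalSpace X] [MeasurableSpace X] [OpensMeasurableSpace X]

/-- If a bounded continuous `[0,1]`-valued function dominates the indicator of `F`,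
then `μ F` is at most the pairing of `μ` with the function. -/
lemma pm_apply_le_testAgainstNN (μ : ProbabilityMeasure X) (f : BoundedContinuousFunction X ℝ≥0)
    {F : Set X} (hF : MeasurableSet F) (h1 : ∀ x ∈ F, 1 ≤ f x) (hle : ∀ x, f x ≤ 1) :
    μ F ≤ μ.toFiniteMeasure.testAgainstNN f := by
  have htop : ∫⁻ x, (f x : ℝ≥0∞) ∂(μ.toMeasure) ≠ ⊤ := by
    have hb : ∫⁻ x, (f x : ℝ≥0∞) ∂(μ.toMeasure) ≤ 1 := by
      calc ∫⁻ x, (f x : ℝ≥0∞) ∂(μ.toMeasure)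
          ≤ ∫⁻ _, (1 : ℝ≥0∞) ∂(μ.toMeasure) := by
            refine MeasureTheory.lintegral_mono fun x => ?_
            exact ENNReal.coe_le_one_iff.mpr (hle x)
        _ = μ.toMeasure Set.univ := MeasureTheory.lintegral_one
        _ = 1 := by simp
    exact ne_top_of_le_ne_top ENNReal.one_ne_top hb
  have key : μ.toMeasure F ≤ ∫⁻ x, (f x : ℝ≥0∞) ∂(μ.toMeasure) := by
    rw [← MeasureTheory.lintegral_indicator_one hF]
    refine MeasureTheory.lintegral_mono fun x => ?_
    by_cases hx : x ∈ F
    · simpa [hx] using (by exact_mod_cast h1 x hx : (1 : ℝ≥0∞) ≤ (f x : ℝ≥0∞))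
    · simp [hx]
  exact ENNReal.toNNReal_mono htop key

/-- If a bounded continuous `[0,1]`-valued function vanishes outside `K`, then the pairing
of `μ` with the function is at most `μ K`. -/
lemma testAgainstNN_le_pm_apply (μ : ProbabilityMeasure X) (f : BoundedContinuousFunction X ℝ≥0)
    {K : Set X} (hK : MeasurableSet K) (h0 : ∀ x ∉ K, f x = 0) (hle : ∀ x, f x ≤ 1) :
    μ.toFiniteMeasure.testAgainstNN f ≤ μ K := by
  have key : ∫⁻ x, (f x : ℝ≥0∞) ∂(μ.toMeasure) ≤ μ.toMeasure K := by
    rw [← MeasureTheory.lintegral_indicator_one hK]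
    refine MeasureTheory.lintegral_mono fun x => ?_
    by_cases hx : x ∈ K
    · simpa [hx] using (by exact_mod_cast hle x : (f x : ℝ≥0∞) ≤ (1 : ℝ≥0∞))
    · simp [hx, h0 x hx]
  exact ENNReal.toNNReal_mono (MeasureTheory.measure_ne_top _ _) key

end Aux

section VietorisAux

variable {X : Type*} [TopologicalSpace X] [MeasurableSpace X] [BorelSpace X]

lemma isOpen_ccPM_subset {W : Set (ProbabilityMeasure X)} (hW : IsOpen W) :
    IsOpen {β : ccPM X | β.1 ⊆ W} := by
  have h : @IsOpen _ (vietorisTopology (ProbabilityMeasure X))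
      {A : Set (ProbabilityMeasure X) | A ⊆ W} :=
    TopologicalSpace.isOpen_generateFrom_of_mem (Or.inl ⟨W, hW, rfl⟩)
  exact (@isOpen_induced_iff (ccPM X) (Set (ProbabilityMeasure X))
    (vietorisTopology (ProbabilityMeasure X)) _ (fun β : ccPM X => β.1)).mpr ⟨_, h, rfl⟩

lemma isOpen_ccPM_hits {W : Set (ProbabilityMeasure X)} (hW : IsOpen W) :
    IsOpen {β : ccPM X | (β.1 ∩ W).Nonempty} := by
  have h : @IsOpen _ (vietorisTopology (ProbabilityMeasure X))
      {A : Set (ProbabilityMeasure X) | (A ∩ W).Nonempty} :=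
    TopologicalSpace.isOpen_generateFrom_of_mem (Or.inr ⟨W, hW, rfl⟩)
  exact (@isOpen_induced_iff (ccPM X) (Set (ProbabilityMeasure X))
    (vietorisTopology (ProbabilityMeasure X)) _ (fun β : ccPM X => β.1)).mpr ⟨_, h, rfl⟩

end VietorisAux

/-- The map `sX : cc(PX) → MEX`, `sX(α)(A) = min{μ(A) : μ ∈ α}`,
is continuous. -/
theorem lower_envelope_map_continuous (X : Type*) [TopologicalSpace X]
    [CompactSpace X] [T2Space X] [MeasurableSpace X] [BorelSpace X]
    (s : ccPM X → {ν : Capacity X // ν.IsExact})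
    (hs : ∀ (α : ccPM X) (A : Set X), IsClosed A →
      (s α).1.toFun A = sInf {x : ℝ | ∃ μ ∈ α.1, ((μ A : ℝ≥0) : ℝ) = x}) :
    Continuous s := by
  classical
  have hbdd : ∀ (β : ccPM X) (A : Set X),
      BddBelow {x : ℝ | ∃ μ ∈ β.1, ((μ A : ℝ≥0) : ℝ) = x} := by
    intro β A
    refine ⟨0, ?_⟩
    rintro x ⟨μ, -, rfl⟩
    exact (μ A).coe_nonneg
  have hne : ∀ (β : ccPM X) (A : Set X),
      Set.Nonempty {x : ℝ | ∃ μ ∈ β.1, ((μ A : ℝ≥0) : ℝ) = x} := by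
    intro β A
    obtain ⟨μ, hμ⟩ := β.2.1
    exact ⟨_, μ, hμ, rfl⟩
  have hcont : Continuous fun α : ccPM X => (s α).1 := by
    refine continuous_generateFrom_iff.mpr ?_
    rintro S (⟨F, a, hF, rfl⟩ | ⟨U, a, hU, rfl⟩)
    · -- subbasic set of the form `{c | c F < a}` with `F` closed
      rw [isOpen_iff_forall_mem_open]
      intro α hα
      simp only [Set.mem_preimage, Set.mem_setOf_eq] at hα
      obtain ⟨O, hOopen, hFO, hOsmall⟩ := (s α).1.usc' F a hF hα
      obtain ⟨V, hVopen, hFV, hclV⟩ := normal_exists_closure_subset hF hOopen hFO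
      have hKc : IsClosed (closure V) := isClosed_closure
      have hνK : (s α).1.toFun (closure V) < a := hOsmall _ hKc.isCompact hclV
      rw [hs α (closure V) hKc] at hνK
      obtain ⟨x, ⟨μ', hμ'α, rfl⟩, hx⟩ := exists_lt_of_csInf_lt (hne α (closure V)) hνK
      obtain ⟨f, hf0, hf1, hf01⟩ := exists_continuous_zero_one_of_isClosed
        hVopen.isClosed_compl hF
        (Set.disjoint_left.mpr fun y hyV hyF => hyV (hFV hyF))
      let fb : BoundedContinuousFunction X ℝ≥0 := BoundedContinuousFunction.mkOfCompact
        ⟨fun y => Real.toNNReal (f y), continuous_real_toNNReal.comp f.continuous⟩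
      have hfb_le : ∀ y, fb y ≤ 1 := fun y =>
        Real.toNNReal_le_iff_le_coe.mpr (by simpa using (hf01 y).2)
      have hfb_F : ∀ y ∈ F, 1 ≤ fb y := fun y hy => by
        simp only [fb, BoundedContinuousFunction.mkOfCompact_apply, ContinuousMap.coe_mk]
        have : f y = 1 := by simpa using hf1 hy
        rw [this]; simp
      have hfb_0 : ∀ y ∉ closure V, fb y = 0 := fun y hy => by
        have hyV : y ∈ Vᶜ := fun h => hy (subset_closure h)
        simp only [fb, BoundedContinuousFunction.mkOfCompact_apply, ContinuousMap.coe_mk]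
        have : f y = 0 := by simpa using hf0 hyV
        rw [this]; simp
      set W : Set (ProbabilityMeasure X) :=
        {μ : ProbabilityMeasure X |
          ((μ.toFiniteMeasure.testAgainstNN fb : ℝ≥0) : ℝ) < a} with hWdef
      have hWopen : IsOpen W :=
        IsOpen.preimage (NNReal.continuous_coe.comp
          (MeasureTheory.ProbabilityMeasure.continuous_testAgainstNN_eval fb)) isOpen_Iio
      refine ⟨{β : ccPM X | (β.1 ∩ W).Nonempty}, ?_, isOpen_ccPM_hits hWopen, ?_⟩
      · rintro β ⟨μ, hμβ, hμW⟩
        simp only [Set.mem_preimage, Set.mem_setOf_eq]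
        rw [hs β F hF]
        refine lt_of_le_of_lt (csInf_le (hbdd β F) ⟨μ, hμβ, rfl⟩) ?_
        refine lt_of_le_of_lt ?_ hμW
        exact_mod_cast pm_apply_le_testAgainstNN μ fb hF.measurableSet hfb_F hfb_le
      · refine ⟨μ', hμ'α, ?_⟩
        show ((μ'.toFiniteMeasure.testAgainstNN fb : ℝ≥0) : ℝ) < a
        refine lt_of_le_of_lt ?_ hx
        exact_mod_cast testAgainstNN_le_pm_apply μ' fb hKc.measurableSet hfb_0 hfb_le
    · -- subbasic set of the form `{c | a < c(U)}` with `U` open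
      rw [isOpen_iff_forall_mem_open]
      intro α hα
      simp only [Set.mem_preimage, Set.mem_setOf_eq] at hα
      have hα' : a < sSup ((s α).1.toFun '' {K : Set X | IsClosed K ∧ K ⊆ U}) := hα
      have hnsup : Set.Nonempty ((s α).1.toFun '' {K : Set X | IsClosed K ∧ K ⊆ U}) :=
        ⟨_, ⟨∅, ⟨isClosed_empty, Set.empty_subset U⟩, rfl⟩⟩
      obtain ⟨y, ⟨K, ⟨hKc, hKU⟩, rfl⟩, hay⟩ := exists_lt_of_lt_csSup hnsup hα'
      set b : ℝ := (a + (s α).1.toFun K) / 2 with hb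
      have hab : a < b := by rw [hb]; linarith
      have hbK : b < (s α).1.toFun K := by rw [hb]; linarith
      obtain ⟨V, hVopen, hKV, hclV⟩ := normal_exists_closure_subset hKc hU hKU
      obtain ⟨f, hf0, hf1, hf01⟩ := exists_continuous_zero_one_of_isClosed
        hVopen.isClosed_compl hKc
        (Set.disjoint_left.mpr fun y hyV hyK => hyV (hKV hyK))
      let fb : BoundedContinuousFunction X ℝ≥0 := BoundedContinuousFunction.mkOfCompact
        ⟨fun y => Real.toNNReal (f y), continuous_real_toNNReal.comp f.continuous⟩
      have hfb_le : ∀ y, fb y ≤ 1 := fun y =>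
        Real.toNNReal_le_iff_le_coe.mpr (by simpa using (hf01 y).2)
      have hfb_K : ∀ y ∈ K, 1 ≤ fb y := fun y hy => by
        simp only [fb, BoundedContinuousFunction.mkOfCompact_apply, ContinuousMap.coe_mk]
        have : f y = 1 := by simpa using hf1 hy
        rw [this]; simp
      have hfb_0 : ∀ y ∉ closure V, fb y = 0 := fun y hy => by
        have hyV : y ∈ Vᶜ := fun h => hy (subset_closure h)
        simp only [fb, BoundedContinuousFunction.mkOfCompact_apply, ContinuousMap.coe_mk]
        have : f y = 0 := by simpa using hf0 hyV
        rw [this]; simp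
      set W : Set (ProbabilityMeasure X) :=
        {μ : ProbabilityMeasure X |
          b < ((μ.toFiniteMeasure.testAgainstNN fb : ℝ≥0) : ℝ)} with hWdef
      have hWopen : IsOpen W :=
        IsOpen.preimage (NNReal.continuous_coe.comp
          (MeasureTheory.ProbabilityMeasure.continuous_testAgainstNN_eval fb)) isOpen_Ioi
      have hclVc : IsClosed (closure V) := isClosed_closure
      refine ⟨{β : ccPM X | β.1 ⊆ W}, ?_, isOpen_ccPM_subset hWopen, ?_⟩
      · intro β hβW
        simp only [Set.mem_preimage, Set.mem_setOf_eq] at hβW ⊢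
        have hν : b ≤ (s β).1.toFun (closure V) := by
          rw [hs β (closure V) hclVc]
          refine le_csInf (hne β (closure V)) ?_
          rintro x ⟨μ, hμβ, rfl⟩
          have h1 : b < ((μ.toFiniteMeasure.testAgainstNN fb : ℝ≥0) : ℝ) := hβW hμβ
          have h2 : μ.toFiniteMeasure.testAgainstNN fb ≤ μ (closure V) :=
            testAgainstNN_le_pm_apply μ fb hclVc.measurableSet hfb_0 hfb_le
          exact le_of_lt (lt_of_lt_of_le h1 (by exact_mod_cast h2))
        have hbAbove : BddAbove ((s β).1.toFun '' {K : Set X | IsClosed K ∧ K ⊆ U}) := by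
          refine ⟨1, ?_⟩
          rintro y ⟨K', ⟨hK'c, -⟩, rfl⟩
          have := (s β).1.mono' K' Set.univ hK'c isClosed_univ (Set.subset_univ _)
          rwa [(s β).1.univ'] at this
        show a < sSup ((s β).1.toFun '' {K : Set X | IsClosed K ∧ K ⊆ U})
        refine lt_of_lt_of_le hab (le_trans hν ?_)
        exact le_csSup hbAbove ⟨closure V, ⟨hclVc, hclV⟩, rfl⟩
      · intro μ hμα
        show b < ((μ.toFiniteMeasure.testAgainstNN fb : ℝ≥0) : ℝ)
        have h1 : (s α).1.toFun K ≤ ((μ K : ℝ≥0) : ℝ) := by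
          rw [hs α K hKc]; exact csInf_le (hbdd α K) ⟨μ, hμα, rfl⟩
        have h2 : μ K ≤ μ.toFiniteMeasure.testAgainstNN fb :=
          pm_apply_le_testAgainstNN μ fb hKc.measurableSet hfb_K hfb_le
        calc b < (s α).1.toFun K := hbK
          _ ≤ ((μ K : ℝ≥0) : ℝ) := h1
          _ ≤ _ := by exact_mod_cast h2
  exact Continuous.subtype_mk hcont _
end

section
/- For a finite set X, a convex (supermodular) normalized game ν : 2^X → [0,1] with ν(∅)=0, ν(X)=1, and ν(A ∪ B) + ν(A ∩ B) ≥ ν(A) + ν(B) for all A, B ⊆ X, is exact: for every B ⊆ X there is a probability measure μ on X with μ(A) ≥ ν(A) for all A ⊆ X and μ(B) = ν(B). -/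
open Set MeasureTheory TopologicalSpace
open scoped NNReal

/-- A (finitely additive) probability measure on the finite set `X`, as a set function. -/
def IsProbFn {X : Type*} (μ : Set X → ℝ) : Prop :=
  (∀ A : Set X, 0 ≤ μ A) ∧ μ Set.univ = 1 ∧
    ∀ A B : Set X, Disjoint A B → μ (A ∪ B) = μ A + μ B

/-- On a finite set, every convex (supermodular) normalized game is exact. -/
theorem finite_convex_game_exact {X : Type*} [Fintype X] (nu : Set X → ℝ)
    (hrange : ∀ A : Set X, 0 ≤ nu A ∧ nu A ≤ 1)
    (h0 : nu ∅ = 0) (h1 : nu Set.univ = 1)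
    (hconv : ∀ A B : Set X, nu A + nu B ≤ nu (A ∪ B) + nu (A ∩ B))
    (B : Set X) :
    ∃ μ : Set X → ℝ, IsProbFn μ ∧ (∀ A : Set X, nu A ≤ μ A) ∧ μ B = nu B := by
  classical
  set n := Fintype.card X with hn
  set e := Fintype.equivFin X with he
  set g : X → ℕ := fun x => (if x ∈ B then 0 else n) + (e x : ℕ) with hgdef
  have hlt : ∀ x, (e x : ℕ) < n := fun x => (e x).isLt
  have hginj : Function.Injective g := by
    intro x y hxy
    have hx' := hlt x; have hy' := hlt y
    simp only [hgdef] at hxy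
    by_cases hx : x ∈ B <;> by_cases hy : y ∈ B <;> simp [hx, hy] at hxy
    · exact e.injective (Fin.val_injective hxy)
    · omega
    · omega
    · exact e.injective (Fin.val_injective (by omega))
  set P : X → Set X := fun x => {y | g y < g x} with hP
  set d : X → ℝ := fun x => nu (P x ∪ {x}) - nu (P x) with hd
  set μ : Set X → ℝ := fun A => ∑ x ∈ Finset.univ.filter (fun y => y ∈ A), d x with hmu
  -- the key supermodularity inequality
  have key : ∀ s : Finset X, nu ↑s ≤ ∑ x ∈ s, d x := by
    intro s
    induction s using Finset.strongInduction with
    | _ s ih =>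
      rcases s.eq_empty_or_nonempty with rfl | hs
      · simp [h0]
      · obtain ⟨x, hx, hmax⟩ := s.exists_max_image g hs
        have h1' : (↑s : Set X) ∪ P x = P x ∪ {x} := by
          ext y
          simp only [Set.mem_union, Set.mem_singleton_iff, Finset.coe_filter, hP,
            Set.mem_setOf_eq, Finset.mem_coe]
          constructor
          · rintro (hy | hy)
            · have := hmax y hy
              rcases lt_or_eq_of_le this with h | h
              · exact Or.inl h
              · exact Or.inr (hginj h)
            · exact Or.inl hy
          · rintro (hy | rfl)
            · exact Or.inr hy
            · exact Or.inl hx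
        have h2' : (↑s : Set X) ∩ P x = ↑(s.erase x) := by
          ext y
          simp only [Set.mem_inter_iff, Finset.coe_erase, Set.mem_diff, hP,
            Set.mem_setOf_eq, Finset.mem_coe, Set.mem_singleton_iff]
          constructor
          · rintro ⟨hy, hlt'⟩
            exact ⟨hy, fun h => by subst h; exact lt_irrefl _ hlt'⟩
          · rintro ⟨hy, hne⟩
            refine ⟨hy, lt_of_le_of_ne (hmax y hy) fun h => hne (hginj h)⟩
        have hc := hconv ↑s (P x)
        rw [h1', h2'] at hc
        have ihe := ih (s.erase x) (Finset.erase_ssubset hx)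
        have hsum : ∑ y ∈ s, d y = d x + ∑ y ∈ s.erase x, d y :=
          (Finset.add_sum_erase s d hx).symm
        have hdx : d x = nu (P x ∪ {x}) - nu (P x) := rfl
        rw [hsum, hdx]
        linarith
  have hμeq : ∀ A : Set X, μ A = ∑ x ∈ Finset.univ.filter (fun y => y ∈ A), d x :=
    fun A => rfl
  have μspec : ∀ (A : Set X) (s : Finset X), (↑s : Set X) = A → μ A = ∑ y ∈ s, d y := by
    intro A s hsA
    have hfs : Finset.univ.filter (fun y => y ∈ A) = s := by
      apply Finset.coe_injective
      subst hsA
      ext y; simp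
    rw [hμeq, hfs]
  have dom : ∀ A : Set X, nu A ≤ μ A := by
    intro A
    have hA : (↑(Finset.univ.filter (fun y => y ∈ A)) : Set X) = A := by
      ext y; simp
    calc nu A = nu ↑(Finset.univ.filter (fun y => y ∈ A)) := by rw [hA]
      _ ≤ ∑ x ∈ Finset.univ.filter (fun y => y ∈ A), d x := key _
      _ = μ A := (hμeq A).symm
  -- initial segments
  set S : ℕ → Set X := fun t => {y | g y < t} with hS
  have segEq : ∀ t, μ (S t) = nu (S t) := by
    intro t
    induction t with
    | zero =>
      have h : S 0 = ∅ := by ext y; simp [hS]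
      rw [h, h0, hμeq]
      simp
    | succ t ih =>
      by_cases hex : ∃ x, g x = t
      · obtain ⟨x, hxt⟩ := hex
        have hxnot : x ∉ S t := by simp [hS, hxt]
        have hSsucc : S (t + 1) = insert x (S t) := by
          ext y
          simp only [hS, Set.mem_setOf_eq, Set.mem_insert_iff]
          constructor
          · intro h
            rcases Nat.lt_succ_iff_lt_or_eq.1 h with h | h
            · exact Or.inr h
            · exact Or.inl (hginj (h.trans hxt.symm))
          · rintro (rfl | h) <;> omega
        have hPx : P x = S t := by ext y; simp [hP, hS, hxt]
        set s0 := Finset.univ.filter (fun y => y ∈ S t) with hs0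
        have hcoe : (↑s0 : Set X) = S t := by ext y; simp [hs0]
        have hxns0 : x ∉ s0 := by
          intro hmem
          exact hxnot (hcoe ▸ Finset.mem_coe.2 hmem)
        have hμt : μ (S t) = ∑ y ∈ s0, d y := μspec _ _ hcoe
        have hμt1 : μ (S (t + 1)) = ∑ y ∈ insert x s0, d y := by
          refine μspec _ _ ?_
          rw [Finset.coe_insert, hcoe, ← hSsucc]
        have hμs : μ (S (t + 1)) = d x + μ (S t) := by
          rw [hμt1, Finset.sum_insert hxns0, hμt]
        have hnus : nu (S (t + 1)) = nu (P x ∪ {x}) := by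
          rw [hPx, Set.union_singleton, hSsucc]
        have hdx : d x = nu (P x ∪ {x}) - nu (P x) := rfl
        rw [hμs, ih, hnus, hdx, hPx]
        ring
      · have h : S (t + 1) = S t := by
          ext y
          simp only [hS, Set.mem_setOf_eq]
          constructor
          · intro h
            rcases Nat.lt_succ_iff_lt_or_eq.1 h with h | h
            · exact h
            · exact absurd ⟨y, h⟩ hex
          · omega
        rw [h]; exact ih
  -- identify univ and B as initial segments
  have huniv : Set.univ = S (2 * n) := by
    ext y
    have := hlt y
    simp only [hS, Set.mem_setOf_eq, Set.mem_univ, true_iff, hgdef]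
    split <;> omega
  have hB : B = S n := by
    ext y
    have := hlt y
    simp only [hS, Set.mem_setOf_eq, hgdef]
    by_cases hy : y ∈ B <;> simp [hy] <;> omega
  refine ⟨μ, ⟨fun A => le_trans (hrange A).1 (dom A), ?_, ?_⟩, dom, ?_⟩
  · rw [huniv, segEq, ← huniv, h1]
  · intro A C hAC
    set sA := Finset.univ.filter (fun y => y ∈ A) with hsA
    set sC := Finset.univ.filter (fun y => y ∈ C) with hsC
    have hcA : (↑sA : Set X) = A := by ext y; simp [hsA]
    have hcC : (↑sC : Set X) = C := by ext y; simp [hsC]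
    have hdisj : Disjoint sA sC := by
      rw [Finset.disjoint_left]
      intro a ha hc
      have ha' : a ∈ A := by rw [← hcA]; exact Finset.mem_coe.2 ha
      have hc' : a ∈ C := by rw [← hcC]; exact Finset.mem_coe.2 hc
      exact hAC.ne_of_mem ha' hc' rfl
    have hμU : μ (A ∪ C) = ∑ y ∈ sA ∪ sC, d y := by
      refine μspec _ _ ?_
      rw [Finset.coe_union, hcA, hcC]
    rw [hμU, Finset.sum_union hdisj, μspec A sA hcA, μspec C sC hcC]
  · rw [hB, segEq]
end

section
/- For a finite set X, every exact normalized game is totally balanced: if ν : 2^X → [0,1] with ν(∅)=0, ν(X)=1 is exact, then for every B ⊆ X, all subsets A_1,…,A_n ⊆ B and reals λ_1,…,λ_n ≥ 0 with Σ λ_i χ_{A_i} ≤ 1 pointwise on X, one has Σ λ_i ν(A_i) ≤ ν(B). -/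
open Set MeasureTheory TopologicalSpace
open scoped NNReal

/-- On a finite set, every exact normalized game is totally balanced. -/
theorem finite_exact_game_totallyBalanced {X : Type*} [Fintype X] (nu : Set X → ℝ)
    (hrange : ∀ A : Set X, 0 ≤ nu A ∧ nu A ≤ 1)
    (h0 : nu ∅ = 0) (h1 : nu Set.univ = 1)
    (hex : ∀ B : Set X, ∃ μ : Set X → ℝ,
      IsProbFn μ ∧ (∀ A : Set X, nu A ≤ μ A) ∧ μ B = nu B) :
    ∀ (B : Set X) (n : ℕ) (lam : Fin n → ℝ) (A : Fin n → Set X),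
      (∀ i, 0 ≤ lam i) → (∀ i, A i ⊆ B) →
      (∀ x : X, ∑ i, lam i * (A i).indicator (fun _ => (1 : ℝ)) x ≤ 1) →
      ∑ i, lam i * nu (A i) ≤ nu B := by
  classical
  intro B n lam A hlam hsub hbound
  obtain ⟨μ, ⟨hpos, huniv, hadd⟩, hdom, hB⟩ := hex B
  have hμ0 : μ ∅ = 0 := by
    have := hadd ∅ ∅ (disjoint_empty _)
    simp at this
    linarith
  have hfin : ∀ s : Finset X, μ ↑s = ∑ x ∈ s, μ {x} := by
    intro s
    induction s using Finset.induction with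
    | empty => simpa using hμ0
    | insert a s ha ih =>
      rw [Finset.coe_insert, Set.insert_eq,
        hadd _ _ (Set.disjoint_singleton_left.mpr (by exact_mod_cast ha)), ih,
        Finset.sum_insert ha]
  have key : ∀ S : Set X, μ S = ∑ x : X, if x ∈ S then μ {x} else 0 := by
    intro S
    have h1 : μ S = ∑ x ∈ S.toFinset, μ {x} := by
      rw [← hfin, Set.coe_toFinset]
    rw [h1]
    rw [show (∑ x : X, if x ∈ S then μ {x} else 0)
        = ∑ x : X, if x ∈ S.toFinset then μ {x} else 0 by
      apply Finset.sum_congr rfl; intro x _; simp [Set.mem_toFinset]]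
    rw [Finset.sum_ite_mem, Finset.univ_inter]
  have step1 : ∑ i, lam i * nu (A i) ≤ ∑ i, lam i * μ (A i) := by
    apply Finset.sum_le_sum
    intro i _
    exact mul_le_mul_of_nonneg_left (hdom (A i)) (hlam i)
  have step2 : ∑ i, lam i * μ (A i)
      = ∑ x : X, ∑ i, lam i * (if x ∈ A i then μ {x} else 0) := by
    rw [Finset.sum_comm]
    apply Finset.sum_congr rfl
    intro i _
    rw [key (A i), Finset.mul_sum]
  have step3 : ∑ x : X, ∑ i, lam i * (if x ∈ A i then μ {x} else 0)
      ≤ ∑ x : X, if x ∈ B then μ {x} else 0 := by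
    apply Finset.sum_le_sum
    intro x _
    by_cases hxB : x ∈ B
    · have heq : ∑ i, lam i * (if x ∈ A i then μ {x} else 0)
          = (∑ i, lam i * (A i).indicator (fun _ => (1 : ℝ)) x) * μ {x} := by
        rw [Finset.sum_mul]
        apply Finset.sum_congr rfl
        intro i _
        by_cases h : x ∈ A i <;> simp [Set.indicator, h] <;> ring
      rw [heq, if_pos hxB]
      calc (∑ i, lam i * (A i).indicator (fun _ => (1 : ℝ)) x) * μ {x}
          ≤ 1 * μ {x} := mul_le_mul_of_nonneg_right (hbound x) (hpos {x})
        _ = μ {x} := one_mul _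
    · have : ∀ i : Fin n, x ∉ A i := fun i h => hxB (hsub i h)
      simp [this, hxB]
  have step4 : (∑ x : X, if x ∈ B then μ {x} else 0) = nu B := by
    rw [← key B, hB]
  linarith
end
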